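/- arXiv:2511.21306 — 4 statements merged into one kernel-verified Lean document; each statement's English description precedes it below -/
import Mathlib

section
/- Let G be a group, K a subgroup, and X a symmetric relative generating set of G with respect to K such that the Cayley graph Γ(G, K⊔X) is Gromov hyperbolic. Then a quasimorphism φ on K is linearly (G,X)-controlled (with some constant C₀ > 0) if and only if φ is (G,X)-controlled. -/
open Monoid
open scoped Monoid.Coprod

namespace QMExt

section QM

variable {H : Type*} [Group H]

/-- A quasimorphism: a real-valued function with finite defect. -/
def IsQM (φ : H → ℝ) : Prop := ∃ D : ℝ, ∀ g h : H, |φ g + φ h - φ (g * h)| ≤ D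

/-- The defect `D(φ)` of a quasimorphism. -/
noncomputable def qmDefect (φ : H → ℝ) : ℝ :=
  sSup {r : ℝ | ∃ g h : H, r = |φ g + φ h - φ (g * h)|}

/-- An antisymmetric function: `φ(g⁻¹) = -φ(g)`. -/
def IsAntisym (φ : H → ℝ) : Prop := ∀ g : H, φ g⁻¹ = - φ g

end QM

section WordMetric

variable {Q : Type*} [Group Q]

/-- Word length of `q` with respect to the alphabet `S`. -/
noncomputable def wordLenOn (S : Set Q) (q : Q) : ℕ :=
  sInf {n | ∃ l : List Q, (∀ y ∈ l, y ∈ S) ∧ l.prod = q ∧ l.length = n}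

/-- Distance in the Cayley graph of `Q` with respect to the generating set `S`. -/
noncomputable def wordDist (S : Set Q) (g h : Q) : ℝ := (wordLenOn S (g⁻¹ * h) : ℝ)

/-- Gromov product of `x` and `y` at `w` in the Cayley graph. -/
noncomputable def gprod (S : Set Q) (x y w : Q) : ℝ :=
  (wordDist S w x + wordDist S w y - wordDist S x y) / 2

/-- The Cayley graph of `Q` w.r.t. `S` is Gromov δ-hyperbolic (four-point condition). -/
def HypWith (S : Set Q) (δ : ℝ) : Prop :=
  ∀ w x y z : Q, min (gprod S x y w) (gprod S y z w) - δ ≤ gprod S x z w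

end WordMetric

/-- A group is hyperbolic if it has a finite symmetric generating set whose
Cayley graph is Gromov hyperbolic. -/
def IsHyperbolicGroup (Q : Type*) [Group Q] : Prop :=
  ∃ S : Set Q, S.Finite ∧ (∀ s ∈ S, s⁻¹ ∈ S) ∧ Subgroup.closure S = ⊤ ∧
    ∃ δ : ℝ, 0 ≤ δ ∧ HypWith S δ

section Rel

variable {Q : Type*} [Group Q]

/-- `φ : P → ℝ` is `Q`-quasi-invariant. -/
def IsGQuasiInvariant (P : Subgroup Q) (φ : ↥P → ℝ) : Prop :=
  ∃ D : ℝ, ∀ k₁ k₂ : ↥P, IsConj (k₁ : Q) (k₂ : Q) → |φ k₁ - φ k₂| ≤ D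

/-- `D^Q(φ)`, the quasi-invariance defect of `φ : P → ℝ`. -/
noncomputable def invDefect (P : Subgroup Q) (φ : ↥P → ℝ) : ℝ :=
  sSup {r : ℝ | ∃ k₁ k₂ : ↥P, IsConj (k₁ : Q) (k₂ : Q) ∧ r = |φ k₁ - φ k₂|}

/-- A letter of the alphabet `P ⊔ Y`: either a `P`-letter, or a generator `y ∈ Y`
or its formal inverse (marked by the boolean). -/
abbrev RelLetter (P : Subgroup Q) (Y : Set Q) : Type _ := ↥P ⊕ ↥Y × Bool

/-- Evaluation of a letter in the free product `P ∗ F(Y)`. -/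
noncomputable def evalLetter (P : Subgroup Q) (Y : Set Q) :
    RelLetter P Y → (↥P ∗ FreeGroup ↥Y)
  | Sum.inl k => Coprod.inl k
  | Sum.inr (x, true) => Coprod.inr (FreeGroup.of x)
  | Sum.inr (x, false) => (Coprod.inr (FreeGroup.of x))⁻¹

/-- Evaluation of a word on the alphabet `P ⊔ Y` in the free product `P ∗ F(Y)`. -/
noncomputable def evalWord (P : Subgroup Q) (Y : Set Q) (l : List (RelLetter P Y)) :
    ↥P ∗ FreeGroup ↥Y :=
  (l.map (evalLetter P Y)).prod

/-- The projection `η : P ∗ F(Y) → P` killing all `Y`-letters. -/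
noncomputable def eta (P : Subgroup Q) (Y : Set Q) : (↥P ∗ FreeGroup ↥Y) →* ↥P :=
  Coprod.lift (MonoidHom.id ↥P) 1

/-- The evaluation map `θ : P ∗ F(Y) → Q`. -/
noncomputable def theta (P : Subgroup Q) (Y : Set Q) : (↥P ∗ FreeGroup ↥Y) →* Q :=
  Coprod.lift P.subtype (FreeGroup.lift fun y : ↥Y => (y : Q))

/-- Word length `|a|` of `a ∈ P ∗ F(Y)` over the alphabet `P ⊔ Y`. -/
noncomputable def wordLen (P : Subgroup Q) (Y : Set Q) (a : ↥P ∗ FreeGroup ↥Y) : ℕ :=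
  sInf {n | ∃ l : List (RelLetter P Y), evalWord P Y l = a ∧ l.length = n}

/-- `|a|_Y`: the number of `Y`-letters in the normal form of `a`, i.e. the least
number of `Y`-letters in a word over `P ⊔ Y` representing `a`. -/
noncomputable def xLen (P : Subgroup Q) (Y : Set Q) (a : ↥P ∗ FreeGroup ↥Y) : ℕ :=
  sInf {m | ∃ l : List (RelLetter P Y), evalWord P Y l = a ∧ l.countP Sum.isRight = m}

/-- `φ` is `(Q,Y)`-controlled by `f`. -/
def ControlledBy (P : Subgroup Q) (Y : Set Q) (φ : ↥P → ℝ) (f : ℕ → ℝ) : Prop :=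
  ∀ n : ℕ, ∀ a : ↥P ∗ FreeGroup ↥Y, a ∈ (theta P Y).ker → wordLen P Y a ≤ n →
    |φ (eta P Y a)| ≤ f n

/-- `φ` is `(Q,Y)`-controlled. -/
def Controlled (P : Subgroup Q) (Y : Set Q) (φ : ↥P → ℝ) : Prop :=
  ∃ f : ℕ → ℝ, ControlledBy P Y φ f

/-- `φ` is linearly `(Q,Y)`-controlled with constant `C₀`. -/
def LinearlyControlled (P : Subgroup Q) (Y : Set Q) (φ : ↥P → ℝ) (C₀ : ℝ) : Prop :=
  ControlledBy P Y φ (fun n => C₀ * n + C₀)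

/-- `R` is the set of relators of a relative presentation `Q = ⟨P, Y ∣ R_P, R⟩`:
`Y` is a relative generating set and `ker θ` is the normal closure of `R`. -/
def IsRelPresentation (P : Subgroup Q) (Y : Set Q) (R : Set (↥P ∗ FreeGroup ↥Y)) : Prop :=
  Function.Surjective (theta P Y) ∧ Subgroup.normalClosure R = (theta P Y).ker

/-- `f` is a relative isoperimetric function of the relative presentation with relators `R`. -/
def RelIsoperimetricFn (P : Subgroup Q) (Y : Set Q) (R : Set (↥P ∗ FreeGroup ↥Y))
    (f : ℕ → ℝ) : Prop :=
  ∀ n : ℕ, ∀ a ∈ (theta P Y).ker, wordLen P Y a ≤ n →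
    ∃ l : List ((↥P ∗ FreeGroup ↥Y) × (↥P ∗ FreeGroup ↥Y)),
      (∀ p ∈ l, p.2 ∈ R) ∧ (l.map fun p => p.1 * p.2 * p.1⁻¹).prod = a ∧ (l.length : ℝ) ≤ f n

/-- Admissible adjacent pairs in a reduced word: no two adjacent `P`-letters, and no
adjacent pair `y y⁻¹` or `y⁻¹ y` of `Y`-letters. -/
def okPair (P : Subgroup Q) (Y : Set Q) : RelLetter P Y → RelLetter P Y → Prop
  | Sum.inl _, Sum.inl _ => False
  | Sum.inr (x, s), Sum.inr (y, t) => x = y → t ≠ !s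
  | _, _ => True

/-- A reduced word on `P ⊔ Y` (the normal form of the element it represents). -/
def IsReducedWord (P : Subgroup Q) (Y : Set Q) (l : List (RelLetter P Y)) : Prop :=
  (∀ k : ↥P, Sum.inl k ∈ l → k ≠ 1) ∧ l.Chain' (okPair P Y)

/-- The relative presentation with relators `R` is bounded. -/
def BoundedRel (P : Subgroup Q) (Y : Set Q) (R : Set (↥P ∗ FreeGroup ↥Y)) : Prop :=
  ∃ B : ℕ, ∀ r ∈ R, wordLen P Y r ≤ B

/-- The relative presentation with relators `R` is strongly bounded: the relators have
uniformly bounded length and only finitely many `P`-letters occur in them. -/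
def StronglyBoundedRel (P : Subgroup Q) (Y : Set Q) (R : Set (↥P ∗ FreeGroup ↥Y)) : Prop :=
  ∃ B : ℕ, ∃ F : Set ↥P, F.Finite ∧
    ∀ r ∈ R, ∃ l : List (RelLetter P Y), IsReducedWord P Y l ∧ evalWord P Y l = r ∧
      l.length ≤ B ∧ ∀ k : ↥P, Sum.inl k ∈ l → k ∈ F

/-- `P` is hyperbolically embedded in `Q`: there are a symmetric relative generating set and
a strongly bounded relative presentation with a linear relative isoperimetric function. -/
def IsHypEmbedded (P : Subgroup Q) : Prop :=
  ∃ Y : Set Q, (∀ y ∈ Y, y⁻¹ ∈ Y) ∧ ∃ R : Set (↥P ∗ FreeGroup ↥Y),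
    IsRelPresentation P Y R ∧ StronglyBoundedRel P Y R ∧
    ∃ A B : ℝ, RelIsoperimetricFn P Y R (fun n => A * n + B)

/-- `Q` is hyperbolic relative to `P` (Osin): there is a finite relative presentation
with a linear relative isoperimetric function. -/
def IsRelHyperbolic (P : Subgroup Q) : Prop :=
  ∃ Y : Set Q, (∀ y ∈ Y, y⁻¹ ∈ Y) ∧ ∃ R : Set (↥P ∗ FreeGroup ↥Y), R.Finite ∧
    IsRelPresentation P Y R ∧ ∃ A B : ℝ, RelIsoperimetricFn P Y R (fun n => A * n + B)

/-- `L` is a (left) transversal of `P` in `Q`: a set of coset representatives. -/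
def IsTransversal (P : Subgroup Q) (L : Set Q) : Prop :=
  ∀ q : Q, ∃! l : Q, l ∈ L ∧ l⁻¹ * q ∈ P

/-- `φ̃_C(a) := φ̃(a) + C·|a|_Y`. -/
noncomputable def phitC (P : Subgroup Q) (Y : Set Q) (φ : ↥P → ℝ) (C : ℝ)
    (a : ↥P ∗ FreeGroup ↥Y) : ℝ :=
  φ (eta P Y a) + C * (xLen P Y a : ℝ)

/-- `Φ_C(g) := inf { φ̃_C(a) ∣ θ(a) = g }`. -/
noncomputable def PhiC (P : Subgroup Q) (Y : Set Q) (φ : ↥P → ℝ) (C : ℝ) (g : Q) : ℝ :=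
  sInf {r : ℝ | ∃ a : ↥P ∗ FreeGroup ↥Y, theta P Y a = g ∧ r = phitC P Y φ C a}

end Rel

section Quot

/-- Word length of an element of a free group. -/
noncomputable def freeLen {A : Type*} (w : FreeGroup A) : ℕ :=
  sInf {n | ∃ l : List (A × Bool), FreeGroup.mk l = w ∧ l.length = n}

/-- `f` is an isoperimetric function of the presentation of `Q` with generators `A`
(mapped to `Q` by `pr`) and relators `Rb`. -/
def IsoFn {Q : Type*} [Group Q] {A : Type*} (pr : FreeGroup A →* Q)
    (Rb : Set (FreeGroup A)) (f : ℕ → ℝ) : Prop :=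
  ∀ n : ℕ, ∀ w ∈ pr.ker, freeLen w ≤ n →
    ∃ l : List (FreeGroup A × FreeGroup A), (∀ p ∈ l, p.2 ∈ Rb) ∧
      (l.map fun p => p.1 * p.2 * p.1⁻¹).prod = w ∧ (l.length : ℝ) ≤ f n

variable {G : Type*} [Group G]

/-- The set of relators `R = { s(r̄)·k_r⁻¹ }` obtained by lifting the relators `R̄` of a
presentation of `G/K` along the lift `σ` of the generators. -/
def Rlift (K : Subgroup G) {Xbar : Set (G ⧸ K)} (Rbar : Set (FreeGroup ↥Xbar))
    (σ : ↥Xbar → G) : Set (↥K ∗ FreeGroup ↥(Set.range σ)) :=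
  {a | ∃ r ∈ Rbar, ∃ k : ↥K,
    theta K (Set.range σ) (Coprod.inr (FreeGroup.map (Set.rangeFactorization σ) r)) = ↑k ∧
    a = Coprod.inr (FreeGroup.map (Set.rangeFactorization σ) r) * (Coprod.inl k)⁻¹}

/-- The set of relators `T' = { w k w⁻¹ k_w⁻¹ ∣ w ∈ X*, k ∈ K }`. -/
def Tset (K : Subgroup G) (X : Set G) : Set (↥K ∗ FreeGroup ↥X) :=
  {a | ∃ lw : List ↥X, ∃ k k' : ↥K,
    theta K X (Coprod.inr (lw.map FreeGroup.of).prod * Coprod.inl k *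
      (Coprod.inr (lw.map FreeGroup.of).prod)⁻¹) = ↑k' ∧
    a = Coprod.inr (lw.map FreeGroup.of).prod * Coprod.inl k *
      (Coprod.inr (lw.map FreeGroup.of).prod)⁻¹ * (Coprod.inl k')⁻¹}

/-- The set of `(G,K)`-commutators `[g,k]` with `g ∈ G`, `k ∈ K`. -/
def commSet (G : Type*) [Group G] (K : Subgroup G) : Set G :=
  {c | ∃ g : G, ∃ k ∈ K, c = g * k * g⁻¹ * k⁻¹}

/-- Stable word length (e.g. stable (mixed) commutator length) with respect to the
generating set `S`, as the infimum of `|gⁿ|/n`. -/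
noncomputable def sclOn {G : Type*} [Group G] (S : Set G) (g : G) : ℝ :=
  ⨅ n : ℕ+, (wordLenOn S (g ^ (n : ℕ)) : ℝ) / ((n : ℕ) : ℝ)

end Quot

end QMExt
open QMExt

namespace QMProof
open QMExt
variable {G : Type*} [Group G]
 (K : Subgroup G) (X : Set G)

noncomputable def letVal : RelLetter K X → G
  | Sum.inl k => (k : G)
  | Sum.inr (x, true) => (x : G)
  | Sum.inr (x, false) => (x : G)⁻¹

lemma theta_evalLetter (t : RelLetter K X) :
    theta K X (evalLetter K X t) = letVal K X t := by
  rcases t with k | ⟨x, b⟩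
  · simp [evalLetter, letVal, theta]
  · cases b <;> simp [evalLetter, letVal, theta]

lemma evalWord_nil : evalWord K X [] = 1 := rfl

lemma evalWord_cons (t : RelLetter K X) (l : List (RelLetter K X)) :
    evalWord K X (t :: l) = evalLetter K X t * evalWord K X l := by
  simp [evalWord]

lemma evalWord_append (l₁ l₂ : List (RelLetter K X)) :
    evalWord K X (l₁ ++ l₂) = evalWord K X l₁ * evalWord K X l₂ := by
  simp [evalWord]

def invLetter : RelLetter K X → RelLetter K X
  | Sum.inl k => Sum.inl k⁻¹
  | Sum.inr (x, b) => Sum.inr (x, !b)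

lemma evalLetter_invLetter (t : RelLetter K X) :
    evalLetter K X (invLetter K X t) = (evalLetter K X t)⁻¹ := by
  rcases t with k | ⟨x, b⟩
  · simp [evalLetter, invLetter]
  · cases b <;> simp [evalLetter, invLetter]

lemma evalWord_reverse_inv (l : List (RelLetter K X)) :
    evalWord K X ((l.map (invLetter K X)).reverse) = (evalWord K X l)⁻¹ := by
  induction l with
  | nil => simp [evalWord]
  | cons t l ih =>
      simp only [List.map_cons, List.reverse_cons, evalWord_append, evalWord_cons, ih]
      simp [evalLetter_invLetter, evalWord, mul_inv_rev]

lemma exists_evalWord (a : ↥K ∗ FreeGroup ↥X) : ∃ l, evalWord K X l = a := by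
  induction a using Coprod.induction_on with
  | inl k => exact ⟨[Sum.inl k], by simp [evalWord, evalLetter]⟩
  | inr w =>
      induction w using FreeGroup.induction_on with
      | C1 => exact ⟨[], by simp [evalWord]⟩
      | of x => exact ⟨[Sum.inr (x, true)], by simp [evalWord, evalLetter]⟩
      | inv_of x _ => exact ⟨[Sum.inr (x, false)], by simp [evalWord, evalLetter]⟩
      | mul x y hx hy =>
          obtain ⟨lx, hlx⟩ := hx; obtain ⟨ly, hly⟩ := hy
          exact ⟨lx ++ ly, by rw [evalWord_append, hlx, hly, map_mul]⟩
  | mul x y hx hy =>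
      obtain ⟨lx, hlx⟩ := hx; obtain ⟨ly, hly⟩ := hy
      exact ⟨lx ++ ly, by rw [evalWord_append, hlx, hly]⟩

lemma wordLen_le_length (l : List (RelLetter K X)) :
    wordLen K X (evalWord K X l) ≤ l.length :=
  Nat.sInf_le ⟨l, rfl, rfl⟩

lemma wordLen_exists (a : ↥K ∗ FreeGroup ↥X) :
    ∃ l, evalWord K X l = a ∧ l.length = wordLen K X a := by
  have hne : {n | ∃ l : List (RelLetter K X), evalWord K X l = a ∧ l.length = n}.Nonempty := by
    obtain ⟨l, hl⟩ := exists_evalWord K X a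
    exact ⟨l.length, l, hl, rfl⟩
  exact Nat.sInf_mem hne

lemma theta_evalWord (l : List (RelLetter K X)) :
    theta K X (evalWord K X l) = (l.map (letVal K X)).prod := by
  unfold evalWord
  rw [map_list_prod]
  simp only [List.map_map]
  congr 1
  exact List.map_congr_left fun t _ => theta_evalLetter K X t

lemma letVal_mem (hXsym : ∀ x ∈ X, x⁻¹ ∈ X) (t : RelLetter K X) :
    letVal K X t ∈ (↑K ∪ X : Set G) := by
  rcases t with k | ⟨x, b⟩
  · exact Or.inl k.2
  · cases b
    · exact Or.inr (hXsym x x.2)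
    · exact Or.inr x.2



lemma wordLenOn_le (S : Set G) {l : List G} {g : G} (hl : ∀ y ∈ l, y ∈ S) (hp : l.prod = g) :
    wordLenOn S g ≤ l.length :=
  Nat.sInf_le ⟨l, hl, hp, rfl⟩

lemma wordLenOn_one (S : Set G) : wordLenOn S (1 : G) = 0 :=
  Nat.le_zero.mp (wordLenOn_le S (l := []) (by simp) (by simp))

lemma exists_min_list (S : Set G)
    (hne : ∀ g : G, ∃ l : List G, (∀ y ∈ l, y ∈ S) ∧ l.prod = g) (g : G) :
    ∃ l : List G, (∀ y ∈ l, y ∈ S) ∧ l.prod = g ∧ l.length = wordLenOn S g := by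
  have hne' : {n | ∃ l : List G, (∀ y ∈ l, y ∈ S) ∧ l.prod = g ∧ l.length = n}.Nonempty := by
    obtain ⟨l, h1, h2⟩ := hne g
    exact ⟨l.length, l, h1, h2, rfl⟩
  exact Nat.sInf_mem hne'

lemma wordLenOn_mul_le (S : Set G)
    (hne : ∀ g : G, ∃ l : List G, (∀ y ∈ l, y ∈ S) ∧ l.prod = g) (g h : G) :
    wordLenOn S (g * h) ≤ wordLenOn S g + wordLenOn S h := by
  obtain ⟨l1, hm1, hp1, hl1⟩ := exists_min_list S hne g
  obtain ⟨l2, hm2, hp2, hl2⟩ := exists_min_list S hne h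
  calc wordLenOn S (g * h) ≤ (l1 ++ l2).length := by
        refine wordLenOn_le S (fun y hy => ?_) (by simp [hp1, hp2])
        rcases List.mem_append.mp hy with h | h
        · exact hm1 y h
        · exact hm2 y h
    _ = wordLenOn S g + wordLenOn S h := by simp [hl1, hl2]

lemma wordLenOn_inv (S : Set G)
    (hne : ∀ g : G, ∃ l : List G, (∀ y ∈ l, y ∈ S) ∧ l.prod = g)
    (hS : ∀ s ∈ S, s⁻¹ ∈ S) (g : G) : wordLenOn S g⁻¹ = wordLenOn S g := by
  have key : ∀ x : G, wordLenOn S x⁻¹ ≤ wordLenOn S x := by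
    intro x
    obtain ⟨l, hm, hp, hl⟩ := exists_min_list S hne x
    refine le_trans (wordLenOn_le S (l := (l.map (·⁻¹)).reverse) ?_ ?_) ?_
    · intro y hy
      simp only [List.mem_reverse, List.mem_map] at hy
      obtain ⟨z, hz, rfl⟩ := hy
      exact hS z (hm z hz)
    · rw [List.prod_reverse_noncomm]
      simp [hp]
    · simp [hl]
  have h1 := key g
  have h2 := key g⁻¹
  rw [inv_inv] at h2
  omega

lemma wordDist_self (S : Set G) (g : G) : wordDist S g g = 0 := by
  simp [wordDist, wordLenOn_one]

lemma wordDist_comm (S : Set G)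
    (hne : ∀ g : G, ∃ l : List G, (∀ y ∈ l, y ∈ S) ∧ l.prod = g)
    (hS : ∀ s ∈ S, s⁻¹ ∈ S) (g h : G) : wordDist S g h = wordDist S h g := by
  unfold wordDist
  rw [← wordLenOn_inv S hne hS (g⁻¹ * h)]
  simp [mul_inv_rev]

lemma wordDist_triangle (S : Set G)
    (hne : ∀ g : G, ∃ l : List G, (∀ y ∈ l, y ∈ S) ∧ l.prod = g) (a b c : G) :
    wordDist S a c ≤ wordDist S a b + wordDist S b c := by
  unfold wordDist
  have h : a⁻¹ * c = (a⁻¹ * b) * (b⁻¹ * c) := by group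
  rw [h]
  exact_mod_cast wordLenOn_mul_le S hne _ _

/-- Key geometric lemma: a `2h`-locally geodesic path of length `≥ h` in a
`δ`-hyperbolic Cayley graph (with `h > 2δ`) does not return to its start. -/
lemma local_geodesic_not_loop (S : Set G)
    (hne : ∀ g : G, ∃ l : List G, (∀ y ∈ l, y ∈ S) ∧ l.prod = g)
    (hS : ∀ s ∈ S, s⁻¹ ∈ S)
    {δ : ℝ} (hδ : 0 ≤ δ) (hyp : HypWith S δ)
    {h n : ℕ} (hh : 2 * δ < (h : ℝ)) (h1 : 1 ≤ h) (hn : h ≤ n)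
    (p : ℕ → G)
    (hgeo : ∀ i j : ℕ, i ≤ j → j ≤ n → j - i ≤ 2 * h →
      wordDist S (p i) (p j) = ((j - i : ℕ) : ℝ)) :
    0 < wordDist S (p 0) (p n) := by
  set m := n / h with hm
  have hm1 : 1 ≤ m := (Nat.one_le_div_iff (by omega)).mpr hn
  have hmh : m * h ≤ n := Nat.div_mul_le_self n h
  set q : ℕ → G := fun j => p (j * h) with hq
  set dd : ℕ → ℝ := fun j => wordDist S (p 0) (q j) with hdd
  set P : ℕ → ℝ := fun j => gprod S (p 0) (q (j + 1)) (q j) with hP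
  have window : ∀ j : ℕ, j + 1 ≤ m → wordDist S (q j) (q (j + 1)) = (h : ℝ) := by
    intro j hj
    have e1 : (j + 1) * h = j * h + h := by ring
    have e2 : (j + 1) * h ≤ m * h := Nat.mul_le_mul_right h hj
    have := hgeo (j * h) ((j + 1) * h) (by omega) (by omega) (by omega)
    rw [this]
    congr 1
    omega
  have window2 : ∀ j : ℕ, j + 2 ≤ m → wordDist S (q j) (q (j + 2)) = ((2 * h : ℕ) : ℝ) := by
    intro j hj
    have e1 : (j + 2) * h = j * h + 2 * h := by ring
    have e2 : (j + 2) * h ≤ m * h := Nat.mul_le_mul_right h hj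
    have := hgeo (j * h) ((j + 2) * h) (by omega) (by omega) (by omega)
    rw [this]
    congr 1
    omega
  have hdd0 : dd 0 = 0 := by
    simp only [hdd, hq]
    rw [show (0 : ℕ) * h = 0 by ring]
    exact wordDist_self S (p 0)
  have hP0 : P 0 = 0 := by
    simp only [hP, gprod, hq]
    rw [show (0 : ℕ) * h = 0 by ring, wordDist_self S (p 0)]
    ring
  have rel : ∀ j : ℕ, j + 1 ≤ m → dd (j + 1) = dd j + h - 2 * P j := by
    intro j hj
    have hPval : P j = (dd j + h - dd (j + 1)) / 2 := by
      simp only [hP, gprod, hdd]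
      rw [wordDist_comm S hne hS (q j) (p 0), window j hj]
      try ring
    linarith [hPval]
  have key : ∀ j : ℕ, j + 1 ≤ m → P j ≤ δ := by
    intro j
    induction j with
    | zero => intro _; rw [hP0]; exact hδ
    | succ j ih =>
        intro hj
        have hjm : j + 1 ≤ m := by omega
        have hPj := ih hjm
        have h4 := hyp (q (j + 1)) (q j) (p 0) (q (j + 2))
        have hz : gprod S (q j) (q (j + 2)) (q (j + 1)) = 0 := by
          simp only [gprod]
          rw [wordDist_comm S hne hS (q (j+1)) (q j), window j hjm]
          have w2 : wordDist S (q (j+1)) (q (j+1+1)) = (h : ℝ) := window (j+1) hj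
          rw [show j + 2 = j + 1 + 1 by ring, w2, window2 j (by omega)]
          push_cast
          ring
        have hxy : gprod S (q j) (p 0) (q (j + 1)) = h - P j := by
          simp only [gprod]
          rw [wordDist_comm S hne hS (q (j+1)) (q j), window j hjm]
          have c1 : wordDist S (q (j+1)) (p 0) = dd (j+1) := wordDist_comm S hne hS _ _
          have c2 : wordDist S (q j) (p 0) = dd j := wordDist_comm S hne hS _ _
          rw [c1, c2, rel j hjm]
          ring
        rw [hz, hxy] at h4
        have hPj1 : gprod S (p 0) (q (j + 2)) (q (j + 1)) = P (j + 1) := rfl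
        rw [hPj1] at h4
        rcases min_le_iff.mp (by linarith : min ((h:ℝ) - P j) (P (j+1)) ≤ δ) with hc | hc
        · linarith
        · exact hc
  have grow : ∀ j : ℕ, 1 ≤ j → j ≤ m → (h : ℝ) ≤ dd j := by
    intro j
    induction j with
    | zero => omega
    | succ j ih =>
        intro _ hj
        rcases Nat.eq_zero_or_pos j with rfl | hjpos
        · rw [rel 0 hj, hdd0, hP0]; ring_nf; exact le_refl _
        · have hjm : j ≤ m := by omega
          have hg := ih hjpos hjm
          rw [rel j hj]
          have hk := key j hj
          linarith
  have hdm : (h : ℝ) ≤ dd m := grow m hm1 le_rfl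
  have hsub : n - m * h ≤ h - 1 := by
    have hmod : n % h < h := Nat.mod_lt n (by omega)
    have e : n % h + h * (n / h) = n := Nat.mod_add_div n h
    have e2 : h * (n / h) = m * h := by rw [hm]; ring
    omega
  have tail : wordDist S (q m) (p n) ≤ ((n - m * h : ℕ) : ℝ) := by
    have := hgeo (m * h) n hmh le_rfl (by omega)
    rw [this]
  have htail : ((n - m * h : ℕ) : ℝ) ≤ (h : ℝ) - 1 := by
    have := (Nat.cast_le (α := ℝ)).mpr hsub
    rw [Nat.cast_sub h1] at this
    simpa using this
  have tri := wordDist_triangle S hne (p 0) (p n) (q m)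
  have hc : wordDist S (p n) (q m) = wordDist S (q m) (p n) := wordDist_comm S hne hS _ _
  have hfin : dd m ≤ wordDist S (p 0) (p n) + wordDist S (q m) (p n) := by
    rw [← hc]; exact tri
  linarith


open Classical in
noncomputable def liftS (K : Subgroup G) (X : Set G) (s : G) : RelLetter K X :=
  if hs : s ∈ K then Sum.inl ⟨s, hs⟩
  else if hx : s ∈ X then Sum.inr (⟨s, hx⟩, true)
  else Sum.inl 1

lemma letVal_liftS {K : Subgroup G} {X : Set G} {s : G} (hs : s ∈ ((K : Set G) ∪ X)) :
    letVal K X (liftS K X s) = s := by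
  unfold liftS
  split_ifs with hk hx
  · simp [letVal]
  · simp [letVal]
  · rcases hs with h | h
    · exact absurd h hk
    · exact absurd h hx

section QMfacts
variable {H : Type*} [Group H]

lemma qm_D_nonneg (φ : H → ℝ) {D : ℝ}
    (hD : ∀ g h : H, |φ g + φ h - φ (g * h)| ≤ D) : 0 ≤ D :=
  le_trans (abs_nonneg _) (hD 1 1)

lemma qm_mul_bound (φ : H → ℝ) {D : ℝ}
    (hD : ∀ g h : H, |φ g + φ h - φ (g * h)| ≤ D) (g h : H) : |φ (g * h)| ≤ |φ g| + |φ h| + D := by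
  have e := abs_le.mp (hD g h)
  have a1 := le_abs_self (φ g); have a2 := neg_abs_le (φ g)
  have b1 := le_abs_self (φ h); have b2 := neg_abs_le (φ h)
  refine abs_le.mpr ⟨by linarith, by linarith⟩

lemma qm_conj_bound (φ : H → ℝ) {D : ℝ}
    (hD : ∀ g h : H, |φ g + φ h - φ (g * h)| ≤ D) (x y : H) : |φ (x * y * x⁻¹)| ≤ |φ y| + |φ 1| + 3 * D := by
  have e1 := abs_le.mp (hD (x * y) x⁻¹)
  have e3' := hD x x⁻¹
  rw [mul_inv_cancel] at e3'
  have e2 := abs_le.mp (hD x y)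
  have e3 := abs_le.mp e3'
  have b1 := le_abs_self (φ y); have b2 := neg_abs_le (φ y)
  have c1 := le_abs_self (φ (1 : H)); have c2 := neg_abs_le (φ (1 : H))
  refine abs_le.mpr ⟨by linarith, by linarith⟩

end QMfacts

lemma controlled_to_linear (K : Subgroup G) (X : Set G)
    (hXsym : ∀ x ∈ X, x⁻¹ ∈ X) (hgen : Function.Surjective (theta K X))
    {δ : ℝ} (hδ : 0 ≤ δ) (hyp : HypWith ((K : Set G) ∪ X) δ)
    (φ : ↥K → ℝ) {D : ℝ} (hD : ∀ g h : ↥K, |φ g + φ h - φ (g * h)| ≤ D)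
    (f : ℕ → ℝ) (hf : ControlledBy K X φ f) :
    ∃ C₀ : ℝ, 0 < C₀ ∧ LinearlyControlled K X φ C₀ := by
  classical
  set S : Set G := (K : Set G) ∪ X with hSdef
  have hS : ∀ s ∈ S, s⁻¹ ∈ S := by
    intro s hs
    rcases hs with h | h
    · exact Or.inl (K.inv_mem h)
    · exact Or.inr (hXsym s h)
  have hne : ∀ g : G, ∃ l : List G, (∀ y ∈ l, y ∈ S) ∧ l.prod = g := by
    intro g
    obtain ⟨a, ha⟩ := hgen g
    obtain ⟨lw, hlw⟩ := exists_evalWord K X a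
    refine ⟨lw.map (letVal K X), ?_, ?_⟩
    · intro y hy
      obtain ⟨t, _, rfl⟩ := List.mem_map.mp hy
      exact letVal_mem K X hXsym t
    · rw [← theta_evalWord, hlw, ha]
  have hD0 : 0 ≤ D := qm_D_nonneg φ hD
  set h : ℕ := ⌊2 * δ⌋₊ + 1 with hhdef
  have hh : 2 * δ < (h : ℝ) := by
    have := Nat.lt_floor_add_one (2 * δ)
    push_cast [hhdef]
    push_cast at this
    linarith
  have h1 : 1 ≤ h := by omega
  have hrange : (Finset.range (4 * h + 1)).Nonempty := Finset.nonempty_range_iff.mpr (by omega)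
  set F₀ : ℝ := (Finset.range (4 * h + 1)).sup' hrange f with hF₀def
  have hF : ∀ k : ℕ, k ≤ 4 * h → f k ≤ F₀ :=
    fun k hk => Finset.le_sup' f (Finset.mem_range.mpr (by omega))
  have hker1 : (1 : ↥K ∗ FreeGroup ↥X) ∈ (theta K X).ker := by
    simp [MonoidHom.mem_ker]
  have hwl1 : wordLen K X (1 : ↥K ∗ FreeGroup ↥X) = 0 := by
    have := wordLen_le_length K X []
    rw [evalWord_nil] at this
    simpa using this
  have hφ1 : |φ 1| ≤ F₀ := by
    have := hf 0 1 hker1 (le_of_eq hwl1)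
    simp only [map_one] at this
    exact le_trans this (hF 0 (by omega))
  have hF0 : 0 ≤ F₀ := le_trans (abs_nonneg _) hφ1
  set E : ℝ := F₀ + |φ 1| + 4 * D with hEdef
  have hE0 : 0 ≤ E := by
    have := abs_nonneg (φ 1)
    rw [hEdef]; linarith
  have key : ∀ n : ℕ, ∀ a : ↥K ∗ FreeGroup ↥X, theta K X a = 1 → wordLen K X a = n →
      |φ (eta K X a)| ≤ F₀ + n * E := by
    intro n
    induction n using Nat.strong_induction_on with
    | _ n IH =>
    intro a hath halen
    by_cases hcase : n < h
    · have hb := hf n a (MonoidHom.mem_ker.mpr hath) (le_of_eq halen)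
      have hfn : f n ≤ F₀ := hF n (by omega)
      have hnn : (0 : ℝ) ≤ (n : ℝ) := Nat.cast_nonneg n
      nlinarith
    · push_neg at hcase
      obtain ⟨l, hla, hllen⟩ := wordLen_exists K X a
      have hlen_n : l.length = n := by rw [hllen, halen]
      set p : ℕ → G := fun i => theta K X (evalWord K X (l.take i)) with hp
      have hsplit : ∀ i j : ℕ, i ≤ j → l.take i ++ (l.take j).drop i = l.take j := by
        intro i j hij
        conv_rhs => rw [← List.take_append_drop i (l.take j)]
        rw [List.take_take, min_eq_left hij]
      have hslicelen : ∀ i j : ℕ, i ≤ j → j ≤ n → ((l.take j).drop i).length = j - i := by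
        intro i j hij hjn
        simp [List.length_drop, List.length_take, hlen_n]
        omega
      have hthslice : ∀ i j : ℕ, i ≤ j →
          theta K X (evalWord K X ((l.take j).drop i)) = (p i)⁻¹ * p j := by
        intro i j hij
        have hev : evalWord K X (l.take j)
            = evalWord K X (l.take i) * evalWord K X ((l.take j).drop i) := by
          rw [← evalWord_append, hsplit i j hij]
        have h2 : p i * theta K X (evalWord K X ((l.take j).drop i)) = p j := by
          rw [hp]
          simp only []
          rw [hev, map_mul]
        rw [← h2]; group
      have pstep : ∀ i j : ℕ, i ≤ j → j ≤ n → wordLenOn S ((p i)⁻¹ * p j) ≤ j - i := by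
        intro i j hij hjn
        refine le_trans (wordLenOn_le S (l := ((l.take j).drop i).map (letVal K X))
          ?_ ?_) ?_
        · intro y hy
          obtain ⟨t, _, rfl⟩ := List.mem_map.mp hy
          exact letVal_mem K X hXsym t
        · rw [← theta_evalWord, hthslice i j hij]
        · rw [List.length_map, hslicelen i j hij hjn]
      by_cases Hbad : ∃ i j : ℕ, i < j ∧ j ≤ n ∧ j - i ≤ 2 * h ∧
          wordLenOn S ((p i)⁻¹ * p j) < j - i
      · obtain ⟨i, j, hij, hjn, hwin, hshort⟩ := Hbad
        obtain ⟨lG, hlGS, hlGp, hlGlen⟩ := exists_min_list S hne ((p i)⁻¹ * p j)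
        set Wl : List (RelLetter K X) := lG.map (liftS K X) with hWldef
        have hWtheta : theta K X (evalWord K X Wl) = (p i)⁻¹ * p j := by
          rw [theta_evalWord, hWldef, List.map_map]
          have hcongr : lG.map (letVal K X ∘ liftS K X) = lG.map id :=
            List.map_congr_left (fun s hs => letVal_liftS (hlGS s hs))
          rw [hcongr, List.map_id, hlGp]
        have hWlen : Wl.length = wordLenOn S ((p i)⁻¹ * p j) := by
          rw [hWldef, List.length_map, hlGlen]
        set A := evalWord K X (l.take i) with hA
        set V := evalWord K X ((l.take j).drop i) with hV
        set Rst := evalWord K X (l.drop j) with hRst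
        set W := evalWord K X Wl with hW
        have hAV : A * V = evalWord K X (l.take j) := by
          rw [hA, hV, ← evalWord_append, hsplit i j (le_of_lt hij)]
        have haAVR : a = A * V * Rst := by
          rw [← hla]
          conv_lhs => rw [← List.take_append_drop j l]
          rw [evalWord_append, hAV, hRst]
        set r := V * W⁻¹ with hr
        set c := A * (W * Rst) with hc
        have habc : a = (A * r * A⁻¹) * c := by
          rw [hr, hc, haAVR]; group
        have hthA : theta K X A = p i := rfl
        have hthV : theta K X V = (p i)⁻¹ * p j := hthslice i j (le_of_lt hij)
        have hthR : theta K X Rst = (p j)⁻¹ := by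
          have h2 : p j * theta K X Rst = 1 := by
            have : theta K X (evalWord K X (l.take j)) * theta K X Rst = 1 := by
              rw [hRst, ← map_mul, ← evalWord_append, List.take_append_drop, hla, hath]
            exact this
          exact eq_inv_of_mul_eq_one_right h2
        have hthr : theta K X r = 1 := by
          rw [hr, map_mul, map_inv, hthV, hW, hWtheta]
          group
        have hthc : theta K X c = 1 := by
          rw [hc, map_mul, map_mul, hthA, hW, hWtheta, hthR]
          group
        have hdij : wordLenOn S ((p i)⁻¹ * p j) ≤ j - i - 1 := by omega
        have hrlen : wordLen K X r ≤ 4 * h := by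
          have hrword : r = evalWord K X (((l.take j).drop i) ++ (Wl.map (invLetter K X)).reverse) := by
            rw [evalWord_append, evalWord_reverse_inv, hr, hV, hW]
          rw [hrword]
          refine le_trans (wordLen_le_length K X _) ?_
          rw [List.length_append, List.length_reverse, List.length_map,
            hslicelen i j (le_of_lt hij) hjn, hWlen]
          omega
        have hφr : |φ (eta K X r)| ≤ F₀ := by
          have := hf (wordLen K X r) r (MonoidHom.mem_ker.mpr hthr) le_rfl
          exact le_trans this (hF _ hrlen)
        have hclen : wordLen K X c ≤ n - 1 := by
          have hcword : c = evalWord K X (l.take i ++ (Wl ++ l.drop j)) := by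
            rw [evalWord_append, evalWord_append, hc, hA, hW, hRst]
          rw [hcword]
          refine le_trans (wordLen_le_length K X _) ?_
          rw [List.length_append, List.length_append, List.length_take,
            List.length_drop, hlen_n, hWlen]
          have := min_eq_left (show i ≤ n by omega)
          omega
        have hclt : wordLen K X c < n := by omega
        have hIHc := IH (wordLen K X c) hclt c hthc rfl
        have hetaa : eta K X a
            = (eta K X A * eta K X r * (eta K X A)⁻¹) * eta K X c := by
          rw [habc, map_mul, map_mul, map_mul, map_inv]
        have hconj : |φ (eta K X A * eta K X r * (eta K X A)⁻¹)|
            ≤ |φ (eta K X r)| + |φ 1| + 3 * D := qm_conj_bound φ hD _ _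
        have hmul : |φ (eta K X a)|
            ≤ |φ (eta K X A * eta K X r * (eta K X A)⁻¹)| + |φ (eta K X c)| + D := by
          rw [hetaa]
          exact qm_mul_bound φ hD _ _
        have h1n : 1 ≤ n := by omega
        have hcast : ((wordLen K X c : ℕ) : ℝ) ≤ (n : ℝ) - 1 := by
          have h2 := (Nat.cast_le (α := ℝ)).mpr hclen
          rw [Nat.cast_sub h1n] at h2
          simpa using h2
        have hmulE : ((wordLen K X c : ℕ) : ℝ) * E ≤ ((n : ℝ) - 1) * E :=
          mul_le_mul_of_nonneg_right hcast hE0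
        have hEexp : E = F₀ + |φ 1| + 4 * D := hEdef
        linarith
      · exfalso
        push_neg at Hbad
        have hgeo : ∀ i j : ℕ, i ≤ j → j ≤ n → j - i ≤ 2 * h →
            wordDist S (p i) (p j) = ((j - i : ℕ) : ℝ) := by
          intro i j hij hjn hwin
          rcases eq_or_lt_of_le hij with rfl | hlt
          · rw [wordDist_self]
            simp
          · have hle := pstep i j hij hjn
            have hge := Hbad i j hlt hjn hwin
            have heq : wordLenOn S ((p i)⁻¹ * p j) = j - i := le_antisymm hle hge
            show ((wordLenOn S ((p i)⁻¹ * p j) : ℕ) : ℝ) = _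
            rw [heq]
        have hpos := local_geodesic_not_loop S hne hS hδ hyp hh h1 hcase p hgeo
        have hp0 : p 0 = 1 := by
          rw [hp]
          simp only [List.take_zero]
          rw [evalWord_nil, map_one]
        have hpn : p n = 1 := by
          rw [hp]
          simp only []
          rw [List.take_of_length_le (le_of_eq hlen_n), hla, hath]
        rw [hp0, hpn, wordDist_self] at hpos
        exact lt_irrefl 0 hpos
  refine ⟨F₀ + E + 1, by linarith, ?_⟩
  intro n a haker halen
  have h0 := key (wordLen K X a) a (MonoidHom.mem_ker.mp haker) rfl
  have h1' : ((wordLen K X a : ℕ) : ℝ) ≤ (n : ℝ) := by exact_mod_cast halen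
  have h2 : ((wordLen K X a : ℕ) : ℝ) * E ≤ (n : ℝ) * E :=
    mul_le_mul_of_nonneg_right h1' hE0
  have h3 : (0 : ℝ) ≤ (n : ℝ) * (F₀ + 1) :=
    mul_nonneg (Nat.cast_nonneg n) (by linarith)
  show |φ (eta K X a)| ≤ (F₀ + E + 1) * (n : ℝ) + (F₀ + E + 1)
  nlinarith

end QMProof

/-- If the Cayley graph `Γ(G, K ⊔ X)` is Gromov hyperbolic, then a quasimorphism on `K`
is linearly `(G,X)`-controlled iff it is `(G,X)`-controlled. -/
theorem linearly_controlled_iff_controlled {G : Type*} [Group G]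
    (K : Subgroup G) (X : Set G)
    (hXsym : ∀ x ∈ X, x⁻¹ ∈ X) (hgen : Function.Surjective (theta K X))
    (hhyp : ∃ δ : ℝ, 0 ≤ δ ∧ HypWith ((K : Set G) ∪ X) δ)
    (φ : ↥K → ℝ) (hqm : IsQM φ) :
    (∃ C₀ : ℝ, 0 < C₀ ∧ LinearlyControlled K X φ C₀) ↔ Controlled K X φ := by
  constructor
  · rintro ⟨C₀, _, hlc⟩
    exact ⟨fun n => C₀ * n + C₀, hlc⟩
  · rintro ⟨f, hf⟩
    obtain ⟨δ, hδ, hyp⟩ := hhyp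
    obtain ⟨D, hD⟩ := hqm
    exact QMProof.controlled_to_linear K X hXsym hgen hδ hyp φ hD f hf
end

section
/- In the setting below, Φ_C(g) is a finite real number for every g ∈ G (the infimum defining it is attained over a nonempty set and is bounded below). Moreover, for every k ∈ K one has Φ_C(k) = φ(k), and the only element of θ⁻¹(k) realizing the infimum is k itself: φ̃_C(a) > φ̃_C(k) for every a ∈ θ⁻¹(k) with a ≠ k. -/
open Monoid
open scoped Monoid.Coprod

open QMExt

namespace PhiCProof

variable {G : Type*} [Group G] (K : Subgroup G) (X : Set G)

lemma evalWord_cons (x : RelLetter K X) (l : List (RelLetter K X)) :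
    evalWord K X (x :: l) = evalLetter K X x * evalWord K X l := by
  simp [evalWord]

lemma evalWord_append (l₁ l₂ : List (RelLetter K X)) :
    evalWord K X (l₁ ++ l₂) = evalWord K X l₁ * evalWord K X l₂ := by
  simp [evalWord]

lemma eta_inl (k : ↥K) : eta K X (Coprod.inl k) = k := by
  simp [eta]

lemma theta_inl (k : ↥K) : theta K X (Coprod.inl k) = (k : G) := by
  simp [theta]

lemma exists_word (a : ↥K ∗ FreeGroup ↥X) : ∃ l, evalWord K X l = a := by
  induction a using Coprod.induction_on with
  | inl k => exact ⟨[Sum.inl k], by simp [evalWord, evalLetter]⟩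
  | inr w =>
    induction w using FreeGroup.induction_on with
    | C1 => exact ⟨[], by simp [evalWord]⟩
    | of x => exact ⟨[Sum.inr (x, true)], by simp [evalWord, evalLetter]⟩
    | inv_of x _ => exact ⟨[Sum.inr (x, false)], by simp [evalWord, evalLetter]⟩
    | mul x y hx hy =>
      obtain ⟨l₁, h₁⟩ := hx; obtain ⟨l₂, h₂⟩ := hy
      exact ⟨l₁ ++ l₂, by rw [evalWord_append, h₁, h₂, map_mul]⟩
  | mul x y hx hy =>
    obtain ⟨l₁, h₁⟩ := hx; obtain ⟨l₂, h₂⟩ := hy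
    exact ⟨l₁ ++ l₂, by rw [evalWord_append, h₁, h₂]⟩

lemma xLen_le (a : ↥K ∗ FreeGroup ↥X) (l : List (RelLetter K X))
    (h : evalWord K X l = a) : xLen K X a ≤ l.countP Sum.isRight :=
  Nat.sInf_le ⟨l, h, rfl⟩

lemma exists_word_xLen (a : ↥K ∗ FreeGroup ↥X) :
    ∃ l, evalWord K X l = a ∧ l.countP Sum.isRight = xLen K X a := by
  have hne : {m | ∃ l : List (RelLetter K X),
      evalWord K X l = a ∧ l.countP Sum.isRight = m}.Nonempty := by
    obtain ⟨l, hl⟩ := exists_word K X a; exact ⟨_, l, hl, rfl⟩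
  exact Nat.sInf_mem hne

lemma xLen_inl (k : ↥K) : xLen K X (Coprod.inl k) = 0 := by
  have := xLen_le K X (Coprod.inl k) [Sum.inl k] (by simp [evalWord, evalLetter])
  simpa using this

lemma xLen_mul_le (a b : ↥K ∗ FreeGroup ↥X) :
    xLen K X (a * b) ≤ xLen K X a + xLen K X b := by
  obtain ⟨l₁, h₁, c₁⟩ := exists_word_xLen K X a
  obtain ⟨l₂, h₂, c₂⟩ := exists_word_xLen K X b
  have := xLen_le K X (a * b) (l₁ ++ l₂) (by rw [evalWord_append, h₁, h₂])
  rw [List.countP_append] at this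
  omega

lemma xLen_eq_zero (a : ↥K ∗ FreeGroup ↥X) (h : xLen K X a = 0) :
    a = Coprod.inl (eta K X a) := by
  obtain ⟨l, hl, hc⟩ := exists_word_xLen K X a
  rw [h] at hc
  have key : ∀ l : List (RelLetter K X), l.countP Sum.isRight = 0 →
      ∃ k : ↥K, evalWord K X l = Coprod.inl k := by
    intro l
    induction l with
    | nil => exact fun _ => ⟨1, by simp [evalWord]⟩
    | cons hd tl ih =>
      intro hcount
      rw [List.countP_cons] at hcount
      cases hd with
      | inl k' =>
        obtain ⟨k, hk⟩ := ih (by simpa using hcount)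
        exact ⟨k' * k, by rw [evalWord_cons, hk]; simp [evalLetter]⟩
      | inr p => simp at hcount
  obtain ⟨k, hk⟩ := key l hc
  have ha : a = Coprod.inl k := by rw [← hl, hk]
  rw [ha, eta_inl]

lemma merge (l : List (RelLetter K X)) :
    ∃ (k : ↥K) (t : List (RelLetter K X)),
      evalWord K X (Sum.inl k :: t) = evalWord K X l ∧
      t.length ≤ 2 * l.countP Sum.isRight := by
  induction l with
  | nil => exact ⟨1, [], by simp [evalWord, evalLetter], by simp⟩
  | cons hd tl ih =>
    obtain ⟨k, t, he, hl⟩ := ih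
    have he' : Coprod.inl k * evalWord K X t = evalWord K X tl := by
      simpa [evalWord_cons, evalLetter] using he
    cases hd with
    | inl k' =>
      refine ⟨k' * k, t, ?_, ?_⟩
      · rw [evalWord_cons, evalWord_cons, ← he']
        simp [evalLetter, mul_assoc]
      · rw [List.countP_cons]; simp; omega
    | inr p =>
      refine ⟨1, Sum.inr p :: Sum.inl k :: t, ?_, ?_⟩
      · have h1 : evalLetter K X (Sum.inl (1 : ↥K)) = 1 := by simp [evalLetter]
        have h2 : evalLetter K X (Sum.inl k) = Coprod.inl k := rfl
        rw [evalWord_cons, evalWord_cons, evalWord_cons, evalWord_cons, h1, one_mul, h2, he']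
      · rw [List.countP_cons]; simp; omega

end PhiCProof

namespace Part2

variable {G : Type*} [Group G] (K : Subgroup G) (X : Set G)
open PhiCProof

lemma wordLen_le_two_xLen (a : ↥K ∗ FreeGroup ↥X) :
    wordLen K X a ≤ 2 * xLen K X a + 1 := by
  obtain ⟨l, hl, hcount⟩ := exists_word_xLen K X a
  obtain ⟨k, t, he, hlen⟩ := merge K X l
  have h1 : wordLen K X a ≤ (Sum.inl k :: t).length :=
    Nat.sInf_le ⟨Sum.inl k :: t, by rw [he, hl], rfl⟩
  have h2 : (Sum.inl k :: t).length = t.length + 1 := by simp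
  omega

lemma defect_le {H : Type*} [Group H] {φ : H → ℝ} (hqm : IsQM φ) (g h : H) :
    |φ g + φ h - φ (g * h)| ≤ qmDefect φ := by
  obtain ⟨D, hD⟩ := hqm
  exact le_csSup ⟨D, by rintro r ⟨g, h, rfl⟩; exact hD g h⟩ ⟨g, h, rfl⟩

lemma defect_nonneg {H : Type*} [Group H] {φ : H → ℝ} (hqm : IsQM φ) :
    0 ≤ qmDefect φ :=
  le_trans (abs_nonneg _) (defect_le hqm 1 1)

lemma phitC_inl (φ : ↥K → ℝ) (C : ℝ) (k : ↥K) :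
    phitC K X φ C (Coprod.inl k) = φ k := by
  rw [phitC, eta_inl, xLen_inl]
  simp

/-- The key lower bound. -/
lemma key (φ : ↥K → ℝ) (hqm : IsQM φ) (C₀ : ℝ) (hC₀ : 0 < C₀)
    (hctrl : LinearlyControlled K X φ C₀) (C : ℝ)
    (a a₀ : ↥K ∗ FreeGroup ↥X) (hth : theta K X a = theta K X a₀) :
    φ (eta K X a₀) + (C - 2 * C₀) * (xLen K X a : ℝ)
      - 2 * C₀ * ((xLen K X a₀⁻¹ : ℝ) + 1) - qmDefect φ ≤ phitC K X φ C a := by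
  set b := a * a₀⁻¹ with hb
  have hker : b ∈ (theta K X).ker := by
    rw [MonoidHom.mem_ker, hb, map_mul, map_inv, hth, mul_inv_cancel]
  have hx : xLen K X b ≤ xLen K X a + xLen K X a₀⁻¹ := xLen_mul_le K X a a₀⁻¹
  have hctrl' := hctrl (2 * xLen K X b + 1) b hker (wordLen_le_two_xLen K X b)
  have hcast : (xLen K X b : ℝ) ≤ (xLen K X a : ℝ) + (xLen K X a₀⁻¹ : ℝ) := by
    exact_mod_cast hx
  have hbnd : |φ (eta K X b)| ≤ C₀ * (2 * (xLen K X b : ℝ) + 1) + C₀ := by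
    convert hctrl' using 2
    push_cast; ring
  have heta : eta K X a = eta K X b * eta K X a₀ := by
    rw [← map_mul, hb, inv_mul_cancel_right]
  have hdef := defect_le hqm (eta K X b) (eta K X a₀)
  rw [← heta] at hdef
  have h1 : φ (eta K X b) + φ (eta K X a₀) - φ (eta K X a) ≤ qmDefect φ :=
    (abs_le.mp hdef).2
  have h2 : -(C₀ * (2 * (xLen K X b : ℝ) + 1) + C₀) ≤ φ (eta K X b) :=
    neg_le_of_abs_le hbnd
  have hpa : (0:ℝ) ≤ (xLen K X a : ℝ) := Nat.cast_nonneg _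
  have hpb : (0:ℝ) ≤ (xLen K X b : ℝ) := Nat.cast_nonneg _
  rw [phitC]
  nlinarith [hcast, hpa, hpb]

end Part2

open PhiCProof Part2 in
/-- `Φ_C` is well defined and finite: the defining set is nonempty and bounded below;
`Φ_C` restricts to `φ` on `K`, and the infimum over `θ⁻¹(k)` is attained only at the
letter `k` itself. -/
theorem PhiC_finite_and_minimal {G : Type*} [Group G]
    (K : Subgroup G) (X : Set G)
    (hXsym : ∀ x ∈ X, x⁻¹ ∈ X) (hgen : Function.Surjective (theta K X))
    (φ : ↥K → ℝ) (hqm : IsQM φ) (hanti : IsAntisym φ)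
    (C₀ : ℝ) (hC₀ : 0 < C₀) (hctrl : LinearlyControlled K X φ C₀)
    (C : ℝ) (hC : 20 * C₀ + 11 * qmDefect φ ≤ C) :
    (∀ g : G,
      {r : ℝ | ∃ a : ↥K ∗ FreeGroup ↥X, theta K X a = g ∧ r = phitC K X φ C a}.Nonempty ∧
      BddBelow {r : ℝ | ∃ a : ↥K ∗ FreeGroup ↥X, theta K X a = g ∧ r = phitC K X φ C a}) ∧
    (∀ k : ↥K, PhiC K X φ C (↑k) = φ k) ∧
    (∀ k : ↥K, ∀ a : ↥K ∗ FreeGroup ↥X, theta K X a = ↑k → a ≠ Coprod.inl k →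
      phitC K X φ C (Coprod.inl k) < phitC K X φ C a) := by
  have hD0 : 0 ≤ qmDefect φ := defect_nonneg hqm
  -- key bound specialized to θ a ∈ K
  have hkey : ∀ (k : ↥K) (a : ↥K ∗ FreeGroup ↥X), theta K X a = (k : G) →
      φ k + (C - 2 * C₀) * (xLen K X a : ℝ) - 2 * C₀ - qmDefect φ ≤ phitC K X φ C a := by
    intro k a ha
    have h := key K X φ hqm C₀ hC₀ hctrl C a (Coprod.inl k)
      (by rw [ha, theta_inl])
    have hinv : (Coprod.inl k : ↥K ∗ FreeGroup ↥X)⁻¹ = Coprod.inl k⁻¹ := by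
      rw [← map_inv]
    rw [eta_inl, hinv, xLen_inl] at h
    push_cast at h
    linarith
  -- case xLen = 0 forces a = inl k
  have hzero : ∀ (k : ↥K) (a : ↥K ∗ FreeGroup ↥X), theta K X a = (k : G) →
      xLen K X a = 0 → a = Coprod.inl k := by
    intro k a ha h0
    have hA := xLen_eq_zero K X a h0
    rw [hA, theta_inl] at ha
    have : eta K X a = k := Subtype.coe_injective ha
    rw [hA, this]
  have part1 : ∀ g : G,
      {r : ℝ | ∃ a : ↥K ∗ FreeGroup ↥X, theta K X a = g ∧ r = phitC K X φ C a}.Nonempty ∧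
      BddBelow {r : ℝ | ∃ a : ↥K ∗ FreeGroup ↥X, theta K X a = g ∧ r = phitC K X φ C a} := by
    intro g
    obtain ⟨a₀, ha₀⟩ := hgen g
    refine ⟨⟨phitC K X φ C a₀, a₀, ha₀, rfl⟩, ?_⟩
    refine ⟨φ (eta K X a₀) - 2 * C₀ * ((xLen K X a₀⁻¹ : ℝ) + 1) - qmDefect φ, ?_⟩
    rintro r ⟨a, ha, rfl⟩
    have h := key K X φ hqm C₀ hC₀ hctrl C a a₀ (by rw [ha, ha₀])
    have hm : (0:ℝ) ≤ (xLen K X a : ℝ) := Nat.cast_nonneg _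
    nlinarith [mul_nonneg (by linarith : (0:ℝ) ≤ C - 2 * C₀) hm]
  refine ⟨part1, ?_, ?_⟩
  · intro k
    have hmem : φ k ∈ {r : ℝ | ∃ a : ↥K ∗ FreeGroup ↥X,
        theta K X a = (k : G) ∧ r = phitC K X φ C a} :=
      ⟨Coprod.inl k, theta_inl K X k, (phitC_inl K X φ C k).symm⟩
    refine le_antisymm (csInf_le (part1 _).2 hmem) (le_csInf (part1 _).1 ?_)
    rintro r ⟨a, ha, rfl⟩
    by_cases h0 : xLen K X a = 0
    · rw [hzero k a ha h0, phitC_inl]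
    · have h1 : (1:ℝ) ≤ (xLen K X a : ℝ) := by
        exact_mod_cast Nat.one_le_iff_ne_zero.mpr h0
      have h := hkey k a ha
      nlinarith [mul_le_mul_of_nonneg_left h1 (by linarith : (0:ℝ) ≤ C - 2 * C₀)]
  · intro k a ha hne
    have h0 : xLen K X a ≠ 0 := fun h0 => hne (hzero k a ha h0)
    have h1 : (1:ℝ) ≤ (xLen K X a : ℝ) := by
      exact_mod_cast Nat.one_le_iff_ne_zero.mpr h0
    have h := hkey k a ha
    rw [phitC_inl]
    nlinarith [mul_le_mul_of_nonneg_left h1 (by linarith : (0:ℝ) ≤ C - 2 * C₀)]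
end

section
/- In the setting below, let γ be an ε-minimal path in the Cayley graph Γ(G, K⊔X) and let α be a subpath of γ with label Lab(α). Then φ̃_C(Lab(α)) ≤ Φ_C(θ(Lab(α))) + 4D + ε. -/
open Monoid
open scoped Monoid.Coprod

open QMExt

section SubpathAux

open Monoid Monoid.CoprodI
open scoped Monoid.Coprod

attribute [local instance] Classical.propDecidable

variable {G : Type*} [Group G] (K : Subgroup G) (X : Set G)

theorem evalWord_nil : evalWord K X [] = 1 := rfl

theorem evalWord_cons (ℓ : RelLetter K X) (t : List (RelLetter K X)) :
    evalWord K X (ℓ :: t) = evalLetter K X ℓ * evalWord K X t := by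
  simp [evalWord]

theorem evalWord_append (l₁ l₂ : List (RelLetter K X)) :
    evalWord K X (l₁ ++ l₂) = evalWord K X l₁ * evalWord K X l₂ := by
  simp [evalWord]

theorem exists_rep (a : ↥K ∗ FreeGroup ↥X) :
    ∃ l : List (RelLetter K X), evalWord K X l = a := by
  induction a using Coprod.induction_on with
  | inl k => exact ⟨[Sum.inl k], by simp [evalWord_cons, evalWord_nil, evalLetter]⟩
  | inr w =>
    induction w using FreeGroup.induction_on with
    | C1 => exact ⟨[], by simp [evalWord_nil]⟩
    | of x =>
      refine ⟨[Sum.inr (x, true)], ?_⟩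
      show evalLetter K X (Sum.inr (x, true)) * 1 = _
      rw [mul_one]
      rfl
    | inv_of x _ =>
      refine ⟨[Sum.inr (x, false)], ?_⟩
      show evalLetter K X (Sum.inr (x, false)) * 1 = _
      rw [mul_one]
      show (Coprod.inr (FreeGroup.of x) : ↥K ∗ FreeGroup ↥X)⁻¹ = _
      rw [← map_inv]
    | mul x y hx hy =>
      obtain ⟨lx, hlx⟩ := hx
      obtain ⟨ly, hly⟩ := hy
      exact ⟨lx ++ ly, by rw [evalWord_append, hlx, hly, map_mul]⟩
  | mul x y hx hy =>
    obtain ⟨lx, hlx⟩ := hx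
    obtain ⟨ly, hly⟩ := hy
    exact ⟨lx ++ ly, by rw [evalWord_append, hlx, hly]⟩

theorem xLen_le_count {a : ↥K ∗ FreeGroup ↥X} {l : List (RelLetter K X)}
    (h : evalWord K X l = a) : xLen K X a ≤ l.countP Sum.isRight :=
  Nat.sInf_le ⟨l, h, rfl⟩

theorem exists_xLen_list (a : ↥K ∗ FreeGroup ↥X) :
    ∃ l : List (RelLetter K X), evalWord K X l = a ∧ l.countP Sum.isRight = xLen K X a := by
  obtain ⟨l, hl⟩ := exists_rep K X a
  exact Nat.sInf_mem (⟨l.countP Sum.isRight, l, hl, rfl⟩ :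
    {m | ∃ l : List (RelLetter K X), evalWord K X l = a ∧ l.countP Sum.isRight = m}.Nonempty)

theorem exists_wordLen_list (a : ↥K ∗ FreeGroup ↥X) :
    ∃ l : List (RelLetter K X), evalWord K X l = a ∧ l.length = wordLen K X a := by
  obtain ⟨l, hl⟩ := exists_rep K X a
  exact Nat.sInf_mem (⟨l.length, l, hl, rfl⟩ :
    {n | ∃ l : List (RelLetter K X), evalWord K X l = a ∧ l.length = n}.Nonempty)

theorem wordLen_le_length {a : ↥K ∗ FreeGroup ↥X} {l : List (RelLetter K X)}
    (h : evalWord K X l = a) : wordLen K X a ≤ l.length :=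
  Nat.sInf_le ⟨l, h, rfl⟩

theorem wordLen_mul_le (a b : ↥K ∗ FreeGroup ↥X) :
    wordLen K X (a * b) ≤ wordLen K X a + wordLen K X b := by
  obtain ⟨la, hla, hca⟩ := exists_wordLen_list K X a
  obtain ⟨lb, hlb, hcb⟩ := exists_wordLen_list K X b
  calc wordLen K X (a * b) ≤ (la ++ lb).length :=
        wordLen_le_length K X (by rw [evalWord_append, hla, hlb])
    _ = wordLen K X a + wordLen K X b := by rw [List.length_append, hca, hcb]

/-! ### The free product as `CoprodI` over `Option ↥X`, and the letter-count invariant -/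

abbrev Idx (X : Set G) : Type _ := Option ↥X

abbrev Fam : Idx X → Type _ :=
  fun o => Option.rec ↥K (fun _ => ULift (Multiplicative ℤ)) o

instance famGroup : ∀ i : Idx X, Group (Fam K X i)
  | none => inferInstanceAs (Group ↥K)
  | some _ => inferInstanceAs (Group (ULift (Multiplicative ℤ)))

/-- The canonical homomorphism to the indexed free product. -/
noncomputable def toI : (↥K ∗ FreeGroup ↥X) →* CoprodI (Fam K X) :=
  Coprod.lift (CoprodI.of (M := Fam K X) (i := none))
    (FreeGroup.lift fun x : ↥X =>
      CoprodI.of (M := Fam K X) (i := some x) (ULift.up (Multiplicative.ofAdd (1 : ℤ))))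

/-- Length of a single letter of the indexed free product. -/
def len0 : ∀ i : Idx X, Fam K X i → ℕ
  | none => fun _ => 0
  | some _ => fun e => (Multiplicative.toAdd e.down).natAbs

noncomputable def wtW (w : Word (Fam K X)) : ℕ :=
  (w.toList.map fun p => len0 K X p.1 p.2).sum

noncomputable def wtC (q : CoprodI (Fam K X)) : ℕ := wtW K X (Word.equiv q)

noncomputable def Wt (a : ↥K ∗ FreeGroup ↥X) : ℕ := wtC K X (toI K X a)

theorem len0_one (i : Idx X) : len0 K X i 1 = 0 := by cases i <;> rfl

theorem len0_mul_le (i : Idx X) (a b : Fam K X i) :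
    len0 K X i (a * b) ≤ len0 K X i a + len0 K X i b := by
  cases i with
  | none => simp [len0]
  | some x =>
    show (Multiplicative.toAdd (a.down * b.down)).natAbs ≤ _
    rw [toAdd_mul]
    exact Int.natAbs_add_le _ _

theorem equiv_prod (w : Word (Fam K X)) : Word.equiv (Word.prod w) = w := by
  have h : (Word.equiv (M := Fam K X)).symm w = Word.prod w := rfl
  rw [← h, Equiv.apply_symm_apply]

theorem equiv_smul (q : CoprodI (Fam K X)) {i : Idx X} (m : Fam K X i) :
    Word.equiv (CoprodI.of m * q) = CoprodI.of m • Word.equiv q := by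
  have h : ∀ z : CoprodI (Fam K X), Word.equiv z = z • Word.empty := fun _ => rfl
  rw [h, h, mul_smul]

theorem wtW_rcons {i : Idx X} (p : Word.Pair (Fam K X) i) :
    wtW K X (Word.rcons p) = len0 K X i p.head + wtW K X p.tail := by
  rw [Word.rcons]
  split_ifs with h
  · rw [h, len0_one, zero_add]
  · simp [wtW, Word.cons]

theorem wtC_of_mul_le {i : Idx X} (m : Fam K X i) (q : CoprodI (Fam K X)) :
    wtC K X (CoprodI.of m * q) ≤ len0 K X i m + wtC K X q := by
  rw [wtC, equiv_smul, Word.of_smul_def]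
  have h1 : wtW K X (Word.rcons
        { Word.equivPair i (Word.equiv q) with
          head := m * (Word.equivPair i (Word.equiv q)).head }) =
      len0 K X i (m * (Word.equivPair i (Word.equiv q)).head) +
        wtW K X (Word.equivPair i (Word.equiv q)).tail :=
    wtW_rcons K X _
  have hw : wtC K X q = len0 K X i (Word.equivPair i (Word.equiv q)).head +
      wtW K X (Word.equivPair i (Word.equiv q)).tail := by
    conv_lhs => rw [wtC, ← (Word.equivPair i).symm_apply_apply (Word.equiv q)]
    rw [Word.equivPair_symm, wtW_rcons]
  rw [h1, hw]
  have := len0_mul_le K X i m (Word.equivPair i (Word.equiv q)).head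
  omega

theorem wtC_one : wtC K X 1 = 0 := by
  rw [wtC]
  have h : Word.equiv (1 : CoprodI (Fam K X)) = Word.empty := by
    have h0 : ∀ z : CoprodI (Fam K X), Word.equiv z = z • Word.empty := fun _ => rfl
    rw [h0, one_smul]
  rw [h]
  rfl

def sgn (s : Bool) : ℤ := cond s 1 (-1)

theorem toI_evalLetter_inl (k : ↥K) :
    toI K X (evalLetter K X (Sum.inl k)) = CoprodI.of (M := Fam K X) (i := none) k :=
  Coprod.lift_apply_inl _ _ _

theorem toI_evalLetter_inr (x : ↥X) (s : Bool) :
    toI K X (evalLetter K X (Sum.inr (x, s))) =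
      CoprodI.of (M := Fam K X) (i := some x) (ULift.up (Multiplicative.ofAdd (sgn s))) := by
  cases s with
  | true =>
    show toI K X (Coprod.inr (FreeGroup.of x)) = _
    rw [toI, Coprod.lift_apply_inr, FreeGroup.lift_apply_of]
    rfl
  | false =>
    show toI K X (Coprod.inr (FreeGroup.of x))⁻¹ = _
    rw [map_inv, toI, Coprod.lift_apply_inr, FreeGroup.lift_apply_of, ← map_inv]
    rfl

theorem len0_sgn (x : ↥X) (s : Bool) :
    len0 K X (some x) (ULift.up (Multiplicative.ofAdd (sgn s))) = 1 := by
  cases s <;> rfl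

theorem Wt_le_count (l : List (RelLetter K X)) :
    Wt K X (evalWord K X l) ≤ l.countP Sum.isRight := by
  induction l with
  | nil =>
    rw [evalWord_nil]
    simp [Wt, map_one, wtC_one]
  | cons ℓ t ih =>
    rw [evalWord_cons, List.countP_cons]
    cases ℓ with
    | inl k =>
      rw [Wt, map_mul, toI_evalLetter_inl]
      rw [Wt] at ih
      have h := wtC_of_mul_le K X (i := none) k (toI K X (evalWord K X t))
      have h0 : len0 K X none k = 0 := rfl
      rw [h0, zero_add] at h
      have hleft : Sum.isRight (Sum.inl k : RelLetter K X) = false := rfl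
      rw [hleft]
      simpa using le_trans h ih
    | inr p =>
      obtain ⟨x, s⟩ := p
      rw [Wt, map_mul, toI_evalLetter_inr]
      rw [Wt] at ih
      have h := wtC_of_mul_le K X (i := some x)
        (ULift.up (Multiplicative.ofAdd (sgn s))) (toI K X (evalWord K X t))
      rw [len0_sgn] at h
      have hright : Sum.isRight (Sum.inr (x, s) : RelLetter K X) = true := rfl
      rw [hright]
      simp only [if_true]
      exact le_trans h (by omega)

/-! ### Normal form of a reduced word -/

noncomputable def sigCons (x : ↥X) (s : Bool) (L : List (Σ i : Idx X, Fam K X i)) :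
    List (Σ i : Idx X, Fam K X i) :=
  match L with
  | ⟨some y, e⟩ :: r =>
    if x = y then ⟨some x, ULift.up (Multiplicative.ofAdd (sgn s)) * e⟩ :: r
    else ⟨some x, ULift.up (Multiplicative.ofAdd (sgn s))⟩ :: L
  | _ => ⟨some x, ULift.up (Multiplicative.ofAdd (sgn s))⟩ :: L

noncomputable def sig : List (RelLetter K X) → List (Σ i : Idx X, Fam K X i)
  | [] => []
  | Sum.inl k :: t => ⟨none, k⟩ :: sig t
  | Sum.inr (x, s) :: t => sigCons K X x s (sig t)

def headOk : List (RelLetter K X) → List (Σ i : Idx X, Fam K X i) → Prop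
  | [], L => L = []
  | Sum.inl k :: _, L => L.head? = some ⟨none, k⟩
  | Sum.inr (x, s) :: _, L =>
      ∃ e : ℤ, L.head? = some ⟨some x, ULift.up (Multiplicative.ofAdd e)⟩ ∧ 0 < sgn s * e

theorem up_ofAdd_ne_one {z : ℤ} (hz : z ≠ 0) :
    (ULift.up (Multiplicative.ofAdd z) : ULift (Multiplicative ℤ)) ≠ 1 := by
  intro h
  exact hz (by simpa using congrArg (fun w => Multiplicative.toAdd w.down) h)

theorem up_ofAdd_mul (a b : ℤ) :
    (ULift.up (Multiplicative.ofAdd a) * ULift.up (Multiplicative.ofAdd b) :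
      ULift (Multiplicative ℤ)) = ULift.up (Multiplicative.ofAdd (a + b)) := rfl

theorem sgn_ne_zero (s : Bool) : sgn s ≠ 0 := by cases s <;> decide

theorem sigCons_cons_some (x y : ↥X) (s : Bool) (E : Fam K X (some y))
    (r : List (Σ i : Idx X, Fam K X i)) :
    sigCons K X x s (⟨some y, E⟩ :: r) =
      if x = y then ⟨some x, ULift.up (Multiplicative.ofAdd (sgn s)) * E⟩ :: r
      else ⟨some x, ULift.up (Multiplicative.ofAdd (sgn s))⟩ :: (⟨some y, E⟩ :: r) := rfl

theorem headOk_fst_ne_none (t : List (RelLetter K X)) (he : headOk K X t (sig K X t))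
    (hne : ∀ k' : ↥K, t.head? ≠ some (Sum.inl k')) :
    ∀ q ∈ (sig K X t).head?, (none : Idx X) ≠ q.1 := by
  cases t with
  | nil => intro q hq; simp [sig] at hq
  | cons ℓ' t' =>
    cases ℓ' with
    | inl k' => exact absurd rfl (hne k')
    | inr p =>
      obtain ⟨y, s'⟩ := p
      have he' : ∃ e : ℤ, (sig K X (Sum.inr (y, s') :: t')).head? =
          some ⟨some y, ULift.up (Multiplicative.ofAdd e)⟩ ∧ 0 < sgn s' * e := he
      obtain ⟨e, he1, -⟩ := he'
      intro q hq
      rw [he1] at hq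
      simp only [Option.mem_def, Option.some.injEq] at hq
      subst hq
      simp

theorem headOk_fst_ne_some (t : List (RelLetter K X)) (x : ↥X)
    (he : headOk K X t (sig K X t))
    (hne : ∀ (s' : Bool) (y : ↥X), t.head? = some (Sum.inr (y, s')) → x ≠ y) :
    ∀ q ∈ (sig K X t).head?, (some x : Idx X) ≠ q.1 := by
  cases t with
  | nil => intro q hq; simp [sig] at hq
  | cons ℓ' t' =>
    cases ℓ' with
    | inl k' =>
      have he' : (sig K X (Sum.inl k' :: t')).head? = some ⟨none, k'⟩ := he
      intro q hq
      rw [he'] at hq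
      simp only [Option.mem_def, Option.some.injEq] at hq
      subst hq
      simp
    | inr p =>
      obtain ⟨y, s'⟩ := p
      have he' : ∃ e : ℤ, (sig K X (Sum.inr (y, s') :: t')).head? =
          some ⟨some y, ULift.up (Multiplicative.ofAdd e)⟩ ∧ 0 < sgn s' * e := he
      obtain ⟨e, he1, -⟩ := he'
      intro q hq
      rw [he1] at hq
      simp only [Option.mem_def, Option.some.injEq] at hq
      subst hq
      simpa using hne s' y rfl

theorem sig_spec : ∀ l : List (RelLetter K X), IsReducedWord K X l →
    ((sig K X l).map fun p => CoprodI.of p.2).prod = toI K X (evalWord K X l) ∧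
    ((sig K X l).map fun p => len0 K X p.1 p.2).sum = l.countP Sum.isRight ∧
    (∀ p ∈ sig K X l, p.2 ≠ 1) ∧
    ((sig K X l).Chain' fun p q => p.1 ≠ q.1) ∧
    headOk K X l (sig K X l) := by
  intro l hred
  induction l with
  | nil =>
    refine ⟨by simp [sig, evalWord_nil], by simp [sig], by simp [sig], List.isChain_nil, rfl⟩
  | cons ℓ t ih =>
    have hredt : IsReducedWord K X t :=
      ⟨fun k hk => hred.1 k (List.mem_cons_of_mem _ hk), hred.2.tail⟩
    obtain ⟨ha, hb, hc, hd, he⟩ := ih hredt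
    cases ℓ with
    | inl k =>
      have hk1 : k ≠ 1 := hred.1 k List.mem_cons_self
      have hsig : sig K X (Sum.inl k :: t) = ⟨none, k⟩ :: sig K X t := rfl
      have hhd : ∀ q ∈ (sig K X t).head?, (none : Idx X) ≠ q.1 := by
        refine headOk_fst_ne_none K X t he ?_
        intro k' hk'
        cases t with
        | nil => simp at hk'
        | cons ℓ' t' =>
          simp only [List.head?_cons, Option.some.injEq] at hk'
          subst hk'
          have hok : okPair K X (Sum.inl k) (Sum.inl k') := (List.isChain_cons_cons.mp hred.2).1
          exact (hok : False).elim
      refine ⟨?_, ?_, ?_, ?_, ?_⟩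
      · rw [hsig, List.map_cons, List.prod_cons, evalWord_cons, map_mul, toI_evalLetter_inl, ha]
      · rw [hsig, List.map_cons, List.sum_cons, List.countP_cons]
        have h0 : len0 K X none k = 0 := rfl
        have hleft : Sum.isRight (Sum.inl k : RelLetter K X) = false := rfl
        rw [h0, hleft, hb]
        simp
      · rw [hsig]
        intro p hp
        rcases List.mem_cons.mp hp with rfl | hp'
        · exact hk1
        · exact hc p hp'
      · rw [hsig]
        exact List.IsChain.cons hd hhd
      · rw [hsig]
        rfl
    | inr q =>
      obtain ⟨x, s⟩ := q
      have hsig0 : sig K X (Sum.inr (x, s) :: t) = sigCons K X x s (sig K X t) := rfl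
      have hfresh : ∀ (_ : sigCons K X x s (sig K X t) =
            ⟨some x, ULift.up (Multiplicative.ofAdd (sgn s))⟩ :: sig K X t),
          (∀ q ∈ (sig K X t).head?, (some x : Idx X) ≠ q.1) →
          ((sig K X (Sum.inr (x, s) :: t)).map fun p => CoprodI.of p.2).prod =
              toI K X (evalWord K X (Sum.inr (x, s) :: t)) ∧
          ((sig K X (Sum.inr (x, s) :: t)).map fun p => len0 K X p.1 p.2).sum =
              (Sum.inr (x, s) :: t).countP Sum.isRight ∧
          (∀ p ∈ sig K X (Sum.inr (x, s) :: t), p.2 ≠ 1) ∧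
          ((sig K X (Sum.inr (x, s) :: t)).Chain' fun p q => p.1 ≠ q.1) ∧
          headOk K X (Sum.inr (x, s) :: t) (sig K X (Sum.inr (x, s) :: t)) := by
        intro hL hhd
        rw [hsig0, hL]
        refine ⟨?_, ?_, ?_, ?_, ?_⟩
        · rw [List.map_cons, List.prod_cons, evalWord_cons, map_mul, toI_evalLetter_inr, ha]
        · rw [List.map_cons, List.sum_cons, List.countP_cons, len0_sgn]
          have hright : Sum.isRight (Sum.inr (x, s) : RelLetter K X) = true := rfl
          rw [hright, hb]
          simp [Nat.add_comm]
        · intro p hp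
          rcases List.mem_cons.mp hp with rfl | hp'
          · exact up_ofAdd_ne_one (sgn_ne_zero s)
          · exact hc p hp'
        · exact List.IsChain.cons hd hhd
        · exact ⟨sgn s, rfl, by cases s <;> decide⟩
      cases t with
      | nil =>
        exact hfresh rfl (by intro q hq; simp [sig] at hq)
      | cons ℓ' t' =>
        cases ℓ' with
        | inl k' =>
          have hsigt : sig K X (Sum.inl k' :: t') = ⟨none, k'⟩ :: sig K X t' := rfl
          have hL : sigCons K X x s (sig K X (Sum.inl k' :: t')) =
              ⟨some x, ULift.up (Multiplicative.ofAdd (sgn s))⟩ ::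
                sig K X (Sum.inl k' :: t') := by
            rw [hsigt]
            rfl
          refine hfresh hL (headOk_fst_ne_some K X _ x he ?_)
          intro s' y hy
          simp at hy
        | inr p' =>
          obtain ⟨y, s'⟩ := p'
          have he' : ∃ e : ℤ, (sig K X (Sum.inr (y, s') :: t')).head? =
              some ⟨some y, ULift.up (Multiplicative.ofAdd e)⟩ ∧ 0 < sgn s' * e := he
          obtain ⟨e, he1, hsgn⟩ := he'
          obtain ⟨r, hr⟩ : ∃ r, sig K X (Sum.inr (y, s') :: t') =
              ⟨some y, ULift.up (Multiplicative.ofAdd e)⟩ :: r := by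
            generalize hL : sig K X (Sum.inr (y, s') :: t') = L at he1
            cases L with
            | nil => simp at he1
            | cons p r =>
              simp only [List.head?_cons, Option.some.injEq] at he1
              exact ⟨r, by rw [he1]⟩
          by_cases hxy : x = y
          · -- merge case
            subst hxy
            have hok : okPair K X (Sum.inr (x, s)) (Sum.inr (x, s')) :=
              (List.isChain_cons_cons.mp hred.2).1
            have hss : s' ≠ !s := (hok : x = x → s' ≠ !s) rfl
            have hs' : s' = s := by cases s <;> cases s' <;> simp_all
            rw [hs'] at hsgn
            have hL : sigCons K X x s (sig K X (Sum.inr (x, s') :: t')) =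
                ⟨some x, ULift.up (Multiplicative.ofAdd (sgn s + e))⟩ :: r := by
              rw [hr, sigCons_cons_some, if_pos rfl, up_ofAdd_mul]
            rw [hsig0, hL]
            refine ⟨?_, ?_, ?_, ?_, ?_⟩
            · rw [List.map_cons, List.prod_cons, evalWord_cons, map_mul, toI_evalLetter_inr,
                ← ha, hr, List.map_cons, List.prod_cons, ← up_ofAdd_mul, map_mul, mul_assoc]
            · rw [List.map_cons, List.sum_cons]
              have hsum : e.natAbs + (r.map fun p => len0 K X p.1 p.2).sum =
                  (Sum.inr (x, s') :: t').countP Sum.isRight := by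
                rw [← hb, hr, List.map_cons, List.sum_cons]
                rfl
              have hcnt : (Sum.inr (x, s) :: Sum.inr (x, s') :: t').countP
                    (Sum.isRight : RelLetter K X → Bool) =
                  (Sum.inr (x, s') :: t').countP Sum.isRight + 1 := by
                rw [List.countP_cons]
                rfl
              have hlen : len0 K X (some x) (ULift.up (Multiplicative.ofAdd (sgn s + e))) =
                  (sgn s + e).natAbs := rfl
              rw [hlen, hcnt, ← hsum]
              have habs : (sgn s + e).natAbs = 1 + e.natAbs := by
                cases s <;> simp only [sgn, cond] at hsgn ⊢ <;> omega
              omega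
            · intro p hp
              rcases List.mem_cons.mp hp with rfl | hp'
              · exact up_ofAdd_ne_one (by cases s <;> simp only [sgn, cond] at hsgn ⊢ <;> omega)
              · exact hc p (by rw [hr]; exact List.mem_cons_of_mem _ hp')
            · rw [hr] at hd
              exact List.IsChain.cons (List.isChain_cons.mp hd).2
                fun q hq => (List.isChain_cons.mp hd).1 q hq
            · exact ⟨sgn s + e, rfl,
                by cases s <;> simp only [sgn, cond] at hsgn ⊢ <;> omega⟩
          · -- distinct generator case
            have hL : sigCons K X x s (sig K X (Sum.inr (y, s') :: t')) =
                ⟨some x, ULift.up (Multiplicative.ofAdd (sgn s))⟩ ::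
                  sig K X (Sum.inr (y, s') :: t') := by
              conv_lhs => rw [hr]
              rw [sigCons_cons_some, if_neg hxy, ← hr]
            refine hfresh hL (headOk_fst_ne_some K X _ x he ?_)
            intro s'' y' hy'
            simp only [List.head?_cons, Option.some.injEq, Sum.inr.injEq, Prod.mk.injEq] at hy'
            rw [← hy'.1]
            exact hxy

theorem Wt_reduced (l : List (RelLetter K X)) (hred : IsReducedWord K X l) :
    Wt K X (evalWord K X l) = l.countP Sum.isRight := by
  obtain ⟨ha, hb, hc, hd, -⟩ := sig_spec K X l hred
  have hp : Word.prod (⟨sig K X l, hc, hd⟩ : Word (Fam K X)) = toI K X (evalWord K X l) := ha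
  rw [Wt, wtC, ← hp, equiv_prod]
  exact hb

theorem Wt_le_xLen (a : ↥K ∗ FreeGroup ↥X) : Wt K X a ≤ xLen K X a := by
  obtain ⟨l, hl, hcount⟩ := exists_xLen_list K X a
  calc Wt K X a = Wt K X (evalWord K X l) := by rw [hl]
    _ ≤ l.countP Sum.isRight := Wt_le_count K X l
    _ = xLen K X a := hcount

theorem xLen_superadd (u m v : List (RelLetter K X)) (hred : IsReducedWord K X (u ++ m ++ v)) :
    xLen K X (evalWord K X u) + xLen K X (evalWord K X m) + xLen K X (evalWord K X v) ≤
      xLen K X (evalWord K X (u ++ m ++ v)) := by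
  have h1 : Wt K X (evalWord K X (u ++ m ++ v)) = (u ++ m ++ v).countP Sum.isRight :=
    Wt_reduced K X _ hred
  have h2 := Wt_le_xLen K X (evalWord K X (u ++ m ++ v))
  have hcu := xLen_le_count K X (rfl : evalWord K X u = evalWord K X u)
  have hcm := xLen_le_count K X (rfl : evalWord K X m = evalWord K X m)
  have hcv := xLen_le_count K X (rfl : evalWord K X v = evalWord K X v)
  have hcount : (u ++ m ++ v).countP (Sum.isRight : RelLetter K X → Bool) =
      u.countP Sum.isRight + m.countP Sum.isRight + v.countP Sum.isRight := by
    simp [List.countP_append]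
    omega
  omega

/-! ### Bounding the word length by the number of `X`-letters -/

def normCons (k : ↥K) (L : List (RelLetter K X)) : List (RelLetter K X) :=
  match L with
  | Sum.inl k' :: r => Sum.inl (k * k') :: r
  | _ => Sum.inl k :: L

def normL : List (RelLetter K X) → List (RelLetter K X)
  | [] => []
  | Sum.inl k :: t => normCons K X k (normL t)
  | Sum.inr p :: t => Sum.inr p :: normL t

def NoKK (L : List (RelLetter K X)) : Prop :=
  L.Chain' fun p q => p.isRight = true ∨ q.isRight = true

theorem normL_spec (l : List (RelLetter K X)) :
    evalWord K X (normL K X l) = evalWord K X l ∧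
    (normL K X l).countP Sum.isRight = l.countP Sum.isRight ∧ NoKK K X (normL K X l) := by
  induction l with
  | nil => exact ⟨rfl, rfl, List.isChain_nil⟩
  | cons ℓ t ih =>
    obtain ⟨ha, hb, hcn⟩ := ih
    cases ℓ with
    | inr p =>
      have hnorm : normL K X (Sum.inr p :: t) = Sum.inr p :: normL K X t := rfl
      refine ⟨?_, ?_, ?_⟩
      · rw [hnorm, evalWord_cons, ha, ← evalWord_cons]
      · rw [hnorm, List.countP_cons, List.countP_cons, hb]
      · rw [hnorm]
        exact List.IsChain.cons hcn fun q hq => Or.inl rfl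
    | inl k =>
      have hnorm : normL K X (Sum.inl k :: t) = normCons K X k (normL K X t) := rfl
      cases hL : normL K X t with
      | nil =>
        have hnc : normCons K X k ([] : List (RelLetter K X)) = [Sum.inl k] := rfl
        have ht1 : evalWord K X t = 1 := by rw [← ha, hL, evalWord_nil]
        refine ⟨?_, ?_, ?_⟩
        · rw [hnorm, hL, hnc, evalWord_cons, evalWord_nil, evalWord_cons, ht1]
        · have h0 : List.countP Sum.isRight t = 0 := by rw [← hb, hL]; rfl
          rw [hnorm, hL, hnc, List.countP_cons, List.countP_cons, h0]
          simp
        · rw [hnorm, hL, hnc]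
          exact List.isChain_singleton _
      | cons ℓ' r =>
        cases ℓ' with
        | inl k' =>
          have hnc : normCons K X k (Sum.inl k' :: r) = Sum.inl (k * k') :: r := rfl
          have hev : evalWord K X t = evalLetter K X (Sum.inl k') * evalWord K X r := by
            rw [← ha, hL, evalWord_cons]
          have hmul : evalLetter K X (Sum.inl (k * k')) =
              evalLetter K X (Sum.inl k) * evalLetter K X (Sum.inl k') := by
            show (Coprod.inl (k * k') : ↥K ∗ FreeGroup ↥X) = _
            rw [map_mul]
            rfl
          have hcn' : NoKK K X (Sum.inl k' :: r) := by rw [← hL]; exact hcn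
          refine ⟨?_, ?_, ?_⟩
          · calc evalWord K X (normL K X (Sum.inl k :: t))
                = evalLetter K X (Sum.inl (k * k')) * evalWord K X r := by
                  rw [hnorm, hL, hnc, evalWord_cons]
              _ = evalLetter K X (Sum.inl k) * evalWord K X t := by
                  rw [hmul, mul_assoc, ← hev]
              _ = evalWord K X (Sum.inl k :: t) := (evalWord_cons K X _ _).symm
          · have hbr : List.countP Sum.isRight (Sum.inl k' :: r) =
                List.countP Sum.isRight t := by rw [← hb, hL]
            calc List.countP Sum.isRight (normL K X (Sum.inl k :: t))
                = List.countP Sum.isRight (Sum.inl (k * k') :: r) := by rw [hnorm, hL, hnc]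
              _ = List.countP Sum.isRight (Sum.inl k' :: r) := by
                  simp [List.countP_cons]
              _ = List.countP Sum.isRight t := hbr
              _ = List.countP Sum.isRight (Sum.inl k :: t) := by
                  simp [List.countP_cons]
          · rw [hnorm, hL, hnc]
            refine List.IsChain.cons (List.isChain_cons.mp hcn').2 ?_
            intro q hq
            exact ((List.isChain_cons.mp hcn').1 q hq).imp (fun h => h) id
        | inr p =>
          have hnc : normCons K X k (Sum.inr p :: r) = Sum.inl k :: Sum.inr p :: r := rfl
          have hev : evalWord K X t = evalWord K X (Sum.inr p :: r) := by rw [← ha, hL]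
          have hcn' : NoKK K X (Sum.inr p :: r) := by rw [← hL]; exact hcn
          refine ⟨?_, ?_, ?_⟩
          · calc evalWord K X (normL K X (Sum.inl k :: t))
                = evalLetter K X (Sum.inl k) * evalWord K X (Sum.inr p :: r) := by
                  rw [hnorm, hL, hnc, evalWord_cons]
              _ = evalWord K X (Sum.inl k :: t) := by rw [← hev, ← evalWord_cons]
          · have hbr : List.countP Sum.isRight (Sum.inr p :: r) =
                List.countP Sum.isRight t := by rw [← hb, hL]
            calc List.countP Sum.isRight (normL K X (Sum.inl k :: t))
                = List.countP Sum.isRight (Sum.inl k :: Sum.inr p :: r) := by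
                  rw [hnorm, hL, hnc]
              _ = List.countP Sum.isRight (Sum.inr p :: r) := by simp [List.countP_cons]
              _ = List.countP Sum.isRight (Sum.inl k :: t) := by
                  rw [hbr]
                  simp [List.countP_cons]
          · rw [hnorm, hL, hnc]
            refine List.IsChain.cons hcn' fun q hq => Or.inr ?_
            simp only [List.head?_cons, Option.mem_def, Option.some.injEq] at hq
            rw [← hq]
            rfl

def pen : List (RelLetter K X) → ℕ
  | Sum.inl _ :: _ => 1
  | _ => 0

theorem pen_le_one (L : List (RelLetter K X)) : pen K X L ≤ 1 := by
  cases L with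
  | nil => exact Nat.zero_le 1
  | cons x t => cases x <;> simp [pen]

theorem length_le_of_NoKK (L : List (RelLetter K X)) (h : NoKK K X L) :
    L.length ≤ 2 * L.countP Sum.isRight + pen K X L := by
  induction L with
  | nil => simp [pen]
  | cons x t ih =>
    have ht := ih h.tail
    cases x with
    | inr p =>
      have hpen := pen_le_one K X t
      have hc : (Sum.inr p :: t).countP (Sum.isRight : RelLetter K X → Bool) =
          t.countP Sum.isRight + 1 := by rw [List.countP_cons]; rfl
      rw [hc, List.length_cons]
      omega
    | inl k =>
      have hpen0 : pen K X t = 0 := by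
        cases t with
        | nil => rfl
        | cons y t' =>
          have := (List.isChain_cons_cons.mp h).1
          cases y with
          | inl k' => simp at this
          | inr p' => rfl
      have hc : (Sum.inl k :: t).countP (Sum.isRight : RelLetter K X → Bool) =
          t.countP Sum.isRight := by rw [List.countP_cons]; rfl
      have hp : pen K X (Sum.inl k :: t) = 1 := rfl
      rw [hc, hp, List.length_cons]
      omega

theorem wordLen_le_two_xLen (a : ↥K ∗ FreeGroup ↥X) :
    wordLen K X a ≤ 2 * xLen K X a + 1 := by
  obtain ⟨l, hl, hc⟩ := exists_xLen_list K X a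
  obtain ⟨ha, hb, hcn⟩ := normL_spec K X l
  have h1 : wordLen K X a ≤ (normL K X l).length :=
    wordLen_le_length K X (by rw [ha, hl])
  have h2 := length_le_of_NoKK K X _ hcn
  have h3 := pen_le_one K X (normL K X l)
  omega

/-! ### Quasimorphism defect bounds -/

theorem qm_bound {H : Type*} [Group H] {φ : H → ℝ} (hqm : IsQM φ) (g h : H) :
    |φ g + φ h - φ (g * h)| ≤ qmDefect φ := by
  obtain ⟨D₀, hD₀⟩ := hqm
  refine le_csSup ⟨D₀, ?_⟩ ⟨g, h, rfl⟩
  rintro r ⟨g', h', rfl⟩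
  exact hD₀ g' h'

theorem qm_defect_nonneg {H : Type*} [Group H] {φ : H → ℝ} (hqm : IsQM φ) :
    0 ≤ qmDefect φ :=
  (abs_nonneg _).trans (qm_bound hqm 1 1)

/-! ### Boundedness below of the defining set of `Φ_C` -/

theorem phiSet_bddBelow (φ : ↥K → ℝ) (hqm : IsQM φ) (C₀ C : ℝ) (hC₀ : 0 < C₀)
    (hctrl : LinearlyControlled K X φ C₀) (hC2 : 2 * C₀ ≤ C)
    (a₀ : ↥K ∗ FreeGroup ↥X) :
    BddBelow {r : ℝ | ∃ c : ↥K ∗ FreeGroup ↥X,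
      theta K X c = theta K X a₀ ∧ r = phitC K X φ C c} := by
  refine ⟨φ (eta K X a₀) - qmDefect φ - C₀ * ((wordLen K X a₀⁻¹ : ℝ) + 2), ?_⟩
  rintro r ⟨c, hc, rfl⟩
  have hker : c * a₀⁻¹ ∈ (theta K X).ker := by
    rw [MonoidHom.mem_ker, map_mul, map_inv, hc, mul_inv_cancel]
  have hctl' := hctrl (wordLen K X (c * a₀⁻¹)) (c * a₀⁻¹) hker le_rfl
  have hctl : |φ (eta K X (c * a₀⁻¹))| ≤
      C₀ * (wordLen K X (c * a₀⁻¹) : ℝ) + C₀ := hctl'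
  have hwl : (wordLen K X (c * a₀⁻¹) : ℝ) ≤ (wordLen K X c : ℝ) + (wordLen K X a₀⁻¹ : ℝ) := by
    exact_mod_cast wordLen_mul_le K X c a₀⁻¹
  have hwx : (wordLen K X c : ℝ) ≤ 2 * (xLen K X c : ℝ) + 1 := by
    exact_mod_cast wordLen_le_two_xLen K X c
  have heta : eta K X (c * a₀⁻¹) * eta K X a₀ = eta K X c := by
    rw [← map_mul, inv_mul_cancel_right]
  have hqmb := qm_bound hqm (eta K X (c * a₀⁻¹)) (eta K X a₀)
  rw [heta] at hqmb
  have h1 := (abs_le.mp hqmb).2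
  have h2 := (abs_le.mp hctl).1
  have h3 : C₀ * (wordLen K X (c * a₀⁻¹) : ℝ) ≤
      C₀ * (2 * (xLen K X c : ℝ) + 1 + (wordLen K X a₀⁻¹ : ℝ)) := by
    apply mul_le_mul_of_nonneg_left _ hC₀.le
    linarith
  have h4 : 2 * C₀ * (xLen K X c : ℝ) ≤ C * (xLen K X c : ℝ) :=
    mul_le_mul_of_nonneg_right hC2 (Nat.cast_nonneg _)
  have h5 : (0 : ℝ) ≤ (xLen K X c : ℝ) := Nat.cast_nonneg _
  show _ ≤ phitC K X φ C c
  rw [phitC]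
  have h6 : C₀ * (wordLen K X (c * a₀⁻¹) : ℝ) ≤
      2 * (C₀ * (xLen K X c : ℝ)) + C₀ + C₀ * (wordLen K X a₀⁻¹ : ℝ) := by nlinarith
  nlinarith

theorem xLen_mul_le (a b : ↥K ∗ FreeGroup ↥X) :
    xLen K X (a * b) ≤ xLen K X a + xLen K X b := by
  obtain ⟨la, hla, hca⟩ := exists_xLen_list K X a
  obtain ⟨lb, hlb, hcb⟩ := exists_xLen_list K X b
  calc xLen K X (a * b) ≤ (la ++ lb).countP Sum.isRight :=
        xLen_le_count K X (by rw [evalWord_append, hla, hlb])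
    _ = xLen K X a + xLen K X b := by rw [List.countP_append, hca, hcb]

end SubpathAux


/-- A subpath of an `ε`-minimal path is `(4D + ε)`-minimal: if the reduced word
`u ++ m ++ v` labels an `ε`-minimal path, then the label `m` of any subpath satisfies
`φ̃_C(Lab α) ≤ Φ_C(θ(Lab α)) + 4D + ε`. -/
theorem subpath_of_minimal_path {G : Type*} [Group G]
    (K : Subgroup G) (X : Set G)
    (hXsym : ∀ x ∈ X, x⁻¹ ∈ X) (hgen : Function.Surjective (theta K X))
    (φ : ↥K → ℝ) (hqm : IsQM φ) (hanti : IsAntisym φ)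
    (C₀ : ℝ) (hC₀ : 0 < C₀) (hctrl : LinearlyControlled K X φ C₀)
    (C : ℝ) (hC : 20 * C₀ + 11 * qmDefect φ ≤ C)
    (ε : ℝ) (hε : 0 < ε) (hεC₀ : ε < C₀)
    (u m v : List (RelLetter K X))
    (hred : IsReducedWord K X (u ++ m ++ v))
    (hmin : phitC K X φ C (evalWord K X (u ++ m ++ v)) ≤
      PhiC K X φ C (theta K X (evalWord K X (u ++ m ++ v))) + ε) :
    phitC K X φ C (evalWord K X m) ≤
      PhiC K X φ C (theta K X (evalWord K X m)) + 4 * qmDefect φ + ε := by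
  classical
  have hD0 : 0 ≤ qmDefect φ := qm_defect_nonneg hqm
  have hC2 : 2 * C₀ ≤ C := by linarith
  have hC0' : (0:ℝ) ≤ C := by linarith
  set Au := evalWord K X u with hAu
  set Am := evalWord K X m with hAm
  set Av := evalWord K X v with hAv
  have hsplit : evalWord K X (u ++ m ++ v) = Au * Am * Av := by
    rw [evalWord_append, evalWord_append]
  have hxlen : xLen K X Au + xLen K X Am + xLen K X Av ≤ xLen K X (Au * Am * Av) := by
    rw [← hsplit]
    exact xLen_superadd K X u m v hred
  have key : ∀ c : ↥K ∗ FreeGroup ↥X, theta K X c = theta K X Am →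
      phitC K X φ C Am ≤ phitC K X φ C c + 4 * qmDefect φ + ε := by
    intro c hc
    have hth : theta K X (Au * c * Av) = theta K X (evalWord K X (u ++ m ++ v)) := by
      rw [hsplit, map_mul, map_mul, map_mul, map_mul, hc]
    have hPhi : PhiC K X φ C (theta K X (evalWord K X (u ++ m ++ v))) ≤
        phitC K X φ C (Au * c * Av) := by
      rw [PhiC]
      exact csInf_le
        (phiSet_bddBelow K X φ hqm C₀ C hC₀ hctrl hC2 (evalWord K X (u ++ m ++ v)))
        ⟨Au * c * Av, hth, rfl⟩
    have hminmid : phitC K X φ C (Au * Am * Av) ≤ phitC K X φ C (Au * c * Av) + ε := by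
      rw [← hsplit]
      exact le_trans hmin (by linarith)
    have hxlen2 : xLen K X (Au * c * Av) ≤ xLen K X Au + xLen K X c + xLen K X Av := by
      calc xLen K X (Au * c * Av) ≤ xLen K X (Au * c) + xLen K X Av := xLen_mul_le K X _ _
        _ ≤ xLen K X Au + xLen K X c + xLen K X Av := by
            have := xLen_mul_le K X Au c
            omega
    have heq1 : eta K X (Au * Am * Av) = eta K X Au * eta K X Am * eta K X Av := by
      rw [map_mul, map_mul]
    have heq2 : eta K X (Au * c * Av) = eta K X Au * eta K X c * eta K X Av := by
      rw [map_mul, map_mul]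
    have e1 := qm_bound hqm (eta K X Au * eta K X Am) (eta K X Av)
    have e2 := qm_bound hqm (eta K X Au) (eta K X Am)
    have f1 := qm_bound hqm (eta K X Au * eta K X c) (eta K X Av)
    have f2 := qm_bound hqm (eta K X Au) (eta K X c)
    rw [← heq1] at e1
    rw [← heq2] at f1
    have e1' := (abs_le.mp e1).2
    have e2' := (abs_le.mp e2).2
    have f1' := (abs_le.mp f1).1
    have f2' := (abs_le.mp f2).1
    have hcast1 : ((xLen K X Au : ℝ) + xLen K X Am + xLen K X Av) ≤
        (xLen K X (Au * Am * Av) : ℝ) := by exact_mod_cast hxlen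
    have hcast2 : (xLen K X (Au * c * Av) : ℝ) ≤
        ((xLen K X Au : ℝ) + xLen K X c + xLen K X Av) := by exact_mod_cast hxlen2
    have hmul1 : C * ((xLen K X Au : ℝ) + xLen K X Am + xLen K X Av) ≤
        C * (xLen K X (Au * Am * Av) : ℝ) := mul_le_mul_of_nonneg_left hcast1 hC0'
    have hmul2 : C * (xLen K X (Au * c * Av) : ℝ) ≤
        C * ((xLen K X Au : ℝ) + xLen K X c + xLen K X Av) :=
      mul_le_mul_of_nonneg_left hcast2 hC0'
    simp only [phitC] at hminmid ⊢
    linarith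
  have hlb : phitC K X φ C Am - (4 * qmDefect φ + ε) ≤ PhiC K X φ C (theta K X Am) := by
    rw [PhiC]
    refine le_csInf ⟨phitC K X φ C Am, Am, rfl, rfl⟩ ?_
    rintro r ⟨c, hc, rfl⟩
    linarith [key c hc]
  linarith
end

section
/- In the setting below, every ε-minimal path in the Cayley graph Γ(G, K⊔X) is a (3,2)-quasi-geodesic: every subpath α satisfies l(α) ≤ 3·d(α₋, α₊) + 2, where l(α) is the length of α, d is the graph metric on Γ(G, K⊔X), and α₋, α₊ are the endpoints of α. -/
open Monoid
open scoped Monoid.Coprod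

open QMExt

namespace QGAux
open QMExt Monoid List
open scoped Monoid.Coprod Classical

variable {G : Type*} [Group G] (K : Subgroup G) (X : Set G)

lemma evalWord_append (l₁ l₂ : List (RelLetter K X)) :
    evalWord K X (l₁ ++ l₂) = evalWord K X l₁ * evalWord K X l₂ := by
  simp [evalWord]

lemma evalWord_cons (e : RelLetter K X) (t : List (RelLetter K X)) :
    evalWord K X (e :: t) = evalLetter K X e * evalWord K X t := by
  simp [evalWord]

lemma evalWord_nil : evalWord K X [] = 1 := rfl

lemma evalWord_singleton (e : RelLetter K X) :
    evalWord K X [e] = evalLetter K X e := by simp [evalWord]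

/-- letter-wise formal inverse -/
def flipL : RelLetter K X → RelLetter K X
  | Sum.inl k => Sum.inl k⁻¹
  | Sum.inr (x, b) => Sum.inr (x, !b)

lemma evalLetter_flipL (e : RelLetter K X) :
    evalLetter K X (flipL K X e) = (evalLetter K X e)⁻¹ := by
  rcases e with k | ⟨x, _ | _⟩ <;> simp [flipL, evalLetter]

lemma evalWord_flip (l : List (RelLetter K X)) :
    evalWord K X ((l.map (flipL K X)).reverse) = (evalWord K X l)⁻¹ := by
  induction l with
  | nil => simp [evalWord]
  | cons e t ih =>
      rw [List.map_cons, List.reverse_cons, evalWord_append, ih, evalWord_singleton,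
        evalLetter_flipL, evalWord_cons, mul_inv_rev]

lemma exists_eval (a : ↥K ∗ FreeGroup ↥X) : ∃ l, evalWord K X l = a := by
  induction a using Coprod.induction_on with
  | inl m => exact ⟨[Sum.inl m], by simp [evalWord, evalLetter]⟩
  | inr n =>
      induction n using FreeGroup.induction_on with
      | C1 => exact ⟨[], by simp [evalWord]⟩
      | of x => exact ⟨[Sum.inr (x, true)], by simp [evalWord, evalLetter]⟩
      | inv_of x _ => exact ⟨[Sum.inr (x, false)], by simp [evalWord, evalLetter]⟩
      | mul x y hx hy =>
          obtain ⟨lx, hlx⟩ := hx; obtain ⟨ly, hly⟩ := hy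
          exact ⟨lx ++ ly, by rw [evalWord_append, hlx, hly, map_mul]⟩
  | mul x y hx hy =>
      obtain ⟨lx, hlx⟩ := hx; obtain ⟨ly, hly⟩ := hy
      exact ⟨lx ++ ly, by rw [evalWord_append, hlx, hly]⟩

lemma wordLen_le (l : List (RelLetter K X)) :
    wordLen K X (evalWord K X l) ≤ l.length :=
  Nat.sInf_le ⟨l, rfl, rfl⟩

lemma xLen_le (l : List (RelLetter K X)) :
    xLen K X (evalWord K X l) ≤ l.countP Sum.isRight :=
  Nat.sInf_le ⟨l, rfl, rfl⟩

lemma exists_eval_wordLen (a : ↥K ∗ FreeGroup ↥X) :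
    ∃ l, evalWord K X l = a ∧ l.length = wordLen K X a := by
  obtain ⟨l, hl⟩ := exists_eval K X a
  have : wordLen K X a ∈ {n | ∃ l : List (RelLetter K X), evalWord K X l = a ∧ l.length = n} :=
    Nat.sInf_mem ⟨l.length, l, hl, rfl⟩
  obtain ⟨l', h1, h2⟩ := this
  exact ⟨l', h1, h2⟩

lemma exists_eval_xLen (a : ↥K ∗ FreeGroup ↥X) :
    ∃ l, evalWord K X l = a ∧ l.countP Sum.isRight = xLen K X a := by
  obtain ⟨l, hl⟩ := exists_eval K X a
  have : xLen K X a ∈ {n | ∃ l : List (RelLetter K X), evalWord K X l = a ∧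
      l.countP Sum.isRight = n} :=
    Nat.sInf_mem ⟨l.countP Sum.isRight, l, hl, rfl⟩
  obtain ⟨l', h1, h2⟩ := this
  exact ⟨l', h1, h2⟩

lemma wordLen_mul_le (a b : ↥K ∗ FreeGroup ↥X) :
    wordLen K X (a * b) ≤ wordLen K X a + wordLen K X b := by
  obtain ⟨la, ha, hla⟩ := exists_eval_wordLen K X a
  obtain ⟨lb, hb, hlb⟩ := exists_eval_wordLen K X b
  calc wordLen K X (a * b) ≤ (la ++ lb).length := by
        rw [← ha, ← hb, ← evalWord_append]; exact wordLen_le K X _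
    _ = wordLen K X a + wordLen K X b := by rw [List.length_append, hla, hlb]

lemma wordLen_inv_le (a : ↥K ∗ FreeGroup ↥X) : wordLen K X a⁻¹ ≤ wordLen K X a := by
  obtain ⟨la, ha, hla⟩ := exists_eval_wordLen K X a
  calc wordLen K X a⁻¹ ≤ ((la.map (flipL K X)).reverse).length := by
        rw [← ha, ← evalWord_flip]; exact wordLen_le K X _
    _ = wordLen K X a := by simp [hla]

/-- no two adjacent `K`-letters -/
def okP : RelLetter K X → RelLetter K X → Prop :=
  fun a b => a.isRight = true ∨ b.isRight = true

lemma chain_okP_of_okPair {l : List (RelLetter K X)} (h : l.Chain' (okPair K X)) :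
    l.Chain' (okP K X) := by
  refine h.imp ?_
  rintro (k | p) (k' | p') h <;> simp [okP, okPair] at h ⊢

lemma length_le_of_chain :
    ∀ n (l : List (RelLetter K X)), l.length ≤ n → l.Chain' (okP K X) →
      l.length ≤ 2 * l.countP Sum.isRight + 1 := by
  intro n
  induction n with
  | zero => intro l hl _; omega
  | succ n ih =>
      intro l hl hc
      match l with
      | [] => simp
      | [e] => rcases e with k | p <;> simp [List.countP_cons]
      | e :: f :: t =>
          rcases e with k | p
          · have hf : f.isRight = true := by
              have := List.isChain_cons_cons.mp hc
              rcases this.1 with h | h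
              · simp at h
              · exact h
            have ht : t.Chain' (okP K X) := (List.isChain_cons_cons.mp hc).2.tail
            have := ih t (by simp at hl; omega) ht
            rcases f with k' | p'
            · simp at hf
            · simp only [List.countP_cons, List.length_cons, Sum.isRight_inl,
                Sum.isRight_inr, if_true, if_false, Bool.false_eq_true] at *
              omega
          · have := ih (f :: t) (by simp at hl ⊢; omega) (List.isChain_cons_cons.mp hc).2
            simp only [List.countP_cons, List.length_cons, Sum.isRight_inl,
              Sum.isRight_inr, if_true, if_false, Bool.false_eq_true] at *
            omega

lemma exists_merged (l : List (RelLetter K X)) :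
    ∃ l₂ : List (RelLetter K X), evalWord K X l₂ = evalWord K X l ∧
      l₂.countP Sum.isRight ≤ l.countP Sum.isRight ∧ l₂.Chain' (okP K X) := by
  induction l with
  | nil => exact ⟨[], rfl, le_refl _, List.isChain_nil⟩
  | cons e t ih =>
      obtain ⟨l₂, he, hc, hch⟩ := ih
      rcases e with k | p
      · match l₂, he, hc, hch with
        | [], he, hc, hch =>
            refine ⟨[Sum.inl k], ?_, by simp [List.countP_cons], List.isChain_singleton _⟩
            rw [evalWord_singleton, evalWord_cons, ← he, evalWord_nil, mul_one]
        | Sum.inl k' :: t₂, he, hc, hch =>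
            refine ⟨Sum.inl (k * k') :: t₂, ?_, ?_, ?_⟩
            · simp only [evalWord_cons]
              rw [← he]
              simp only [evalWord_cons, evalLetter, map_mul, mul_assoc]
            · simpa [List.countP_cons] using hc
            · refine List.isChain_cons.mpr ⟨?_, hch.tail⟩
              intro y hy
              have := List.isChain_cons.mp hch
              rcases this.1 y hy with h | h
              · simp [okP] at h
              · exact Or.inr h
        | Sum.inr p' :: t₂, he, hc, hch =>
            refine ⟨Sum.inl k :: Sum.inr p' :: t₂, ?_, ?_, ?_⟩
            · simp only [evalWord_cons]
              rw [← evalWord_cons, he]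
            · simpa [List.countP_cons] using hc
            · exact List.isChain_cons_cons.mpr ⟨Or.inr rfl, hch⟩
      · refine ⟨Sum.inr p :: l₂, ?_, ?_, ?_⟩
        · rw [evalWord_cons, evalWord_cons, he]
        · simp [List.countP_cons]; omega
        · exact List.isChain_cons.mpr ⟨fun y _ => Or.inl rfl, hch⟩

lemma wordLen_le_two_xLen (a : ↥K ∗ FreeGroup ↥X) :
    wordLen K X a ≤ 2 * xLen K X a + 1 := by
  obtain ⟨l, hl, hcnt⟩ := exists_eval_xLen K X a
  obtain ⟨l₂, he, hc, hch⟩ := exists_merged K X l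
  have h1 : wordLen K X a ≤ l₂.length := by rw [← hl, ← he]; exact wordLen_le K X _
  have h2 := length_le_of_chain K X l₂.length l₂ le_rfl hch
  omega

end QGAux

namespace QGAux
open QMExt Monoid List
open scoped Monoid.Coprod Classical

variable {G : Type*} [Group G] (K : Subgroup G) (X : Set G)

/-- The two factors of `↥K ∗ FreeGroup ↥X`, indexed by `Bool`. -/
def M2 : Bool → Type _
  | false => ↥K
  | true => FreeGroup ↥X

instance M2group : ∀ b, Group (M2 K X b)
  | false => inferInstanceAs (Group ↥K)
  | true => inferInstanceAs (Group (FreeGroup ↥X))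

noncomputable instance M2deceq (b : Bool) : DecidableEq (M2 K X b) :=
  fun x y => Classical.dec _

/-- The canonical map to the indexed coproduct. -/
noncomputable def psi : (↥K ∗ FreeGroup ↥X) →* Monoid.CoprodI (M2 K X) :=
  Coprod.lift (Monoid.CoprodI.of (M := M2 K X) (i := false))
    (Monoid.CoprodI.of (M := M2 K X) (i := true))

@[simp] lemma psi_inl (k : ↥K) :
    psi K X (Coprod.inl k) = Monoid.CoprodI.of (M := M2 K X) (i := false) k :=
  Coprod.lift_apply_inl _ _ _

@[simp] lemma psi_inr (w : FreeGroup ↥X) :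
    psi K X (Coprod.inr w) = Monoid.CoprodI.of (M := M2 K X) (i := true) w :=
  Coprod.lift_apply_inr _ _ _

/-- weight of a syllable: `X`-length for the free factor, `0` for `K`. -/
noncomputable def sylW : (Σ b, M2 K X b) → ℕ
  | ⟨false, _⟩ => 0
  | ⟨true, v⟩ => FreeGroup.norm v

/-- total `X`-weight of a normal form word -/
noncomputable def weight (w : Monoid.CoprodI.Word (M2 K X)) : ℕ :=
  (w.toList.map (sylW K X)).sum

/-- `X`-length of the actual normal form of an element. -/
noncomputable def NX (a : ↥K ∗ FreeGroup ↥X) : ℕ :=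
  weight K X (Monoid.CoprodI.Word.equiv (psi K X a))

lemma sylW_one (i : Bool) : sylW K X ⟨i, 1⟩ = 0 := by
  cases i
  · rfl
  · simp [sylW, FreeGroup.norm_one]; exact FreeGroup.norm_one

lemma sylW_mul_le (i : Bool) (m h : M2 K X i) :
    sylW K X ⟨i, m * h⟩ ≤ sylW K X ⟨i, m⟩ + sylW K X ⟨i, h⟩ := by
  cases i
  · simp [sylW]
  · exact FreeGroup.norm_mul_le m h

lemma weight_rcons (i : Bool) (p : Monoid.CoprodI.Word.Pair (M2 K X) i) :
    weight K X (Monoid.CoprodI.Word.rcons p) = sylW K X ⟨i, p.head⟩ + weight K X p.tail := by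
  rw [Monoid.CoprodI.Word.rcons]
  split_ifs with h
  · rw [h, sylW_one]; simp
  · simp [weight, Monoid.CoprodI.Word.cons]

lemma weight_eq_head_tail (i : Bool) (w : Monoid.CoprodI.Word (M2 K X)) :
    weight K X w = sylW K X ⟨i, (Monoid.CoprodI.Word.equivPair i w).head⟩ +
      weight K X (Monoid.CoprodI.Word.equivPair i w).tail := by
  conv_lhs => rw [← (Monoid.CoprodI.Word.equivPair i).symm_apply_apply w]
  rw [Monoid.CoprodI.Word.equivPair_symm, weight_rcons]

lemma weight_smul_le (i : Bool) (m : M2 K X i) (w : Monoid.CoprodI.Word (M2 K X)) :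
    weight K X (Monoid.CoprodI.of m • w) ≤ sylW K X ⟨i, m⟩ + weight K X w := by
  rw [Monoid.CoprodI.Word.of_smul_def, weight_rcons]
  have e1 : ({ Monoid.CoprodI.Word.equivPair i w with
      head := m * (Monoid.CoprodI.Word.equivPair i w).head } :
      Monoid.CoprodI.Word.Pair (M2 K X) i).head
      = m * (Monoid.CoprodI.Word.equivPair i w).head := rfl
  have e2 : ({ Monoid.CoprodI.Word.equivPair i w with
      head := m * (Monoid.CoprodI.Word.equivPair i w).head } :
      Monoid.CoprodI.Word.Pair (M2 K X) i).tail
      = (Monoid.CoprodI.Word.equivPair i w).tail := rfl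
  rw [e1, e2]
  have h1 := weight_eq_head_tail K X i w
  have h2 := sylW_mul_le K X i m (Monoid.CoprodI.Word.equivPair i w).head
  omega

lemma equiv_apply (z : Monoid.CoprodI (M2 K X)) :
    Monoid.CoprodI.Word.equiv z = z • Monoid.CoprodI.Word.empty := rfl

lemma equiv_mul (x y : Monoid.CoprodI (M2 K X)) :
    Monoid.CoprodI.Word.equiv (x * y) = x • (Monoid.CoprodI.Word.equiv y) := by
  rw [equiv_apply, equiv_apply, mul_smul]

lemma NX_one : NX K X 1 = 0 := by
  show weight K X (Monoid.CoprodI.Word.equiv (psi K X 1)) = 0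
  rw [map_one]
  show weight K X ((1 : Monoid.CoprodI (M2 K X)) • Monoid.CoprodI.Word.empty) = 0
  rw [one_smul]
  rfl

lemma NX_letter_mul (e : RelLetter K X) (b : ↥K ∗ FreeGroup ↥X) :
    NX K X (evalLetter K X e * b) ≤ (if Sum.isRight e then 1 else 0) + NX K X b := by
  rcases e with k | ⟨x, bb⟩
  · show NX K X (Coprod.inl k * b) ≤ _
    unfold NX
    rw [map_mul, psi_inl, equiv_mul]
    have := weight_smul_le K X false k (Monoid.CoprodI.Word.equiv (psi K X b))
    have h0 : sylW K X ⟨false, k⟩ = 0 := rfl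
    rw [h0] at this
    simpa using this
  · cases bb
    · show NX K X ((Coprod.inr (FreeGroup.of x))⁻¹ * b) ≤ _
      unfold NX
      rw [map_mul, map_inv, psi_inr]
      refine le_trans (le_of_eq (congrArg (fun z => weight K X (Monoid.CoprodI.Word.equiv (z * psi K X b))) (map_inv (Monoid.CoprodI.of (M := M2 K X) (i := true)) (FreeGroup.of x : M2 K X true)).symm)) ?_
      rw [equiv_mul]
      have := weight_smul_le K X true (FreeGroup.of x)⁻¹ (Monoid.CoprodI.Word.equiv (psi K X b))
      have hn : sylW K X ⟨true, (FreeGroup.of x)⁻¹⟩ = 1 := by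
        show FreeGroup.norm (((FreeGroup.of x) : FreeGroup ↥X)⁻¹) = 1
        rw [FreeGroup.norm_inv_eq, FreeGroup.norm_of]
      simp only [hn] at this
      exact le_of_le_of_eq this (by simp)
    · show NX K X (Coprod.inr (FreeGroup.of x) * b) ≤ _
      unfold NX
      rw [map_mul, psi_inr, equiv_mul]
      have := weight_smul_le K X true (FreeGroup.of x) (Monoid.CoprodI.Word.equiv (psi K X b))
      have hn : sylW K X ⟨true, (FreeGroup.of x)⟩ = 1 := by
        show FreeGroup.norm ((FreeGroup.of x) : FreeGroup ↥X) = 1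
        rw [FreeGroup.norm_of]
      simp only [hn] at this
      simpa using this

lemma NX_eval_le (l : List (RelLetter K X)) :
    NX K X (evalWord K X l) ≤ l.countP Sum.isRight := by
  induction l with
  | nil => simpa [evalWord_nil] using (NX_one K X).le
  | cons e t ih =>
      rw [evalWord_cons]
      calc NX K X (evalLetter K X e * evalWord K X t)
          ≤ (if Sum.isRight e then 1 else 0) + NX K X (evalWord K X t) :=
            NX_letter_mul K X e _
        _ ≤ (e :: t).countP Sum.isRight := by
            rw [List.countP_cons]
            rcases e with k | p <;> simp at * <;> omega

lemma NX_le_xLen (a : ↥K ∗ FreeGroup ↥X) : NX K X a ≤ xLen K X a := by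
  obtain ⟨l, hl, hcnt⟩ := exists_eval_xLen K X a
  rw [← hcnt, ← hl]
  exact NX_eval_le K X l

end QGAux

namespace QGAux
open QMExt Monoid List
open scoped Monoid.Coprod Classical

variable {G : Type*} [Group G] (K : Subgroup G) (X : Set G)

/-- the initial maximal run of `X`-letters -/
def runL : List (RelLetter K X) → List (↥X × Bool)
  | Sum.inr p :: t => p :: runL t
  | _ => []

/-- what remains after the initial maximal run of `X`-letters -/
def restL : List (RelLetter K X) → List (RelLetter K X)
  | Sum.inr _ :: t => restL t
  | l => l

@[simp] lemma runL_nil : runL K X [] = [] := rfl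
@[simp] lemma runL_inl (k : ↥K) (t) : runL K X (Sum.inl k :: t) = [] := rfl
@[simp] lemma runL_inr (p) (t) : runL K X (Sum.inr p :: t) = p :: runL K X t := rfl
@[simp] lemma restL_nil : restL K X [] = [] := rfl
@[simp] lemma restL_inl (k : ↥K) (t) : restL K X (Sum.inl k :: t) = Sum.inl k :: t := rfl
@[simp] lemma restL_inr (p) (t) : restL K X (Sum.inr p :: t) = restL K X t := rfl

lemma length_restL_le (l : List (RelLetter K X)) : (restL K X l).length ≤ l.length := by
  induction l with
  | nil => simp
  | cons e t ih =>
      rcases e with k | p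
      · simp
      · simp only [restL_inr, List.length_cons]
        omega

lemma psi_evalLetter_inr (p : ↥X × Bool) :
    psi K X (evalLetter K X (Sum.inr p)) =
      Monoid.CoprodI.of (M := M2 K X) (i := true) (FreeGroup.mk [p]) := by
  rcases p with ⟨x, _ | _⟩
  · show psi K X ((Coprod.inr (FreeGroup.of x))⁻¹) = _
    rw [map_inv, psi_inr]
    have hx : ((FreeGroup.of x : M2 K X true)⁻¹) = (FreeGroup.mk [(x, false)] : M2 K X true) := by
      show ((FreeGroup.mk [(x, true)] : FreeGroup ↥X))⁻¹ = (FreeGroup.mk [(x, false)] : FreeGroup ↥X)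
      rw [FreeGroup.inv_mk]
      simp [FreeGroup.invRev]
    exact (map_inv (Monoid.CoprodI.of (M := M2 K X) (i := true)) (FreeGroup.of x : M2 K X true)).symm.trans (congrArg _ hx)
  · show psi K X (Coprod.inr (FreeGroup.of x)) = _
    rw [psi_inr]
    rfl

lemma psi_eval_run (l : List (RelLetter K X)) :
    psi K X (evalWord K X l) =
      Monoid.CoprodI.of (M := M2 K X) (i := true) (FreeGroup.mk (runL K X l)) *
        psi K X (evalWord K X (restL K X l)) := by
  induction l with
  | nil => simp [evalWord_nil, ← FreeGroup.one_eq_mk]; exact (map_one (Monoid.CoprodI.of (M := M2 K X) (i := true))).symm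
  | cons e t ih =>
      rcases e with k | p
      · simp [← FreeGroup.one_eq_mk]; exact map_one (Monoid.CoprodI.of (M := M2 K X) (i := true))
      · rw [evalWord_cons, map_mul, ih, psi_evalLetter_inr, restL_inr, runL_inr,
          ← mul_assoc]
        exact congrArg (· * psi K X (evalWord K X (restL K X t))) (map_mul (Monoid.CoprodI.of (M := M2 K X) (i := true)) (FreeGroup.mk [p] : M2 K X true) (FreeGroup.mk (runL K X t))).symm

lemma cnt_run_rest (l : List (RelLetter K X)) :
    l.countP Sum.isRight = (runL K X l).length + (restL K X l).countP Sum.isRight := by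
  induction l with
  | nil => simp
  | cons e t ih =>
      rcases e with k | p
      · simp
      · simp only [runL_inr, restL_inr, List.countP_cons, List.length_cons,
          Sum.isRight_inr, if_true]
        omega

lemma chain_restL {l : List (RelLetter K X)} (h : l.Chain' (okPair K X)) :
    (restL K X l).Chain' (okPair K X) := by
  induction l with
  | nil => simpa using h
  | cons e t ih =>
      rcases e with k | p
      · simpa using h
      · simpa using ih h.tail

lemma mem_restL {l : List (RelLetter K X)} {e : RelLetter K X} (h : e ∈ restL K X l) :
    e ∈ l := by
  induction l with
  | nil => simpa using h
  | cons f t ih =>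
      rcases f with k | p
      · simpa using h
      · simp only [restL_inr] at h
        exact List.mem_cons_of_mem _ (ih h)

lemma restL_shape (l : List (RelLetter K X)) :
    restL K X l = [] ∨ ∃ k t', restL K X l = Sum.inl k :: t' := by
  induction l with
  | nil => left; rfl
  | cons e t ih =>
      rcases e with k | p
      · right; exact ⟨k, t, rfl⟩
      · simpa using ih


/-- the relation of being a reduced (no-cancellation) pair of free-group letters -/
def nocancel : (↥X × Bool) → (↥X × Bool) → Prop :=
  fun a b => ¬(a.1 = b.1 ∧ b.2 = !a.2)

lemma run_chain {l : List (RelLetter K X)} (h : l.Chain' (okPair K X)) :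
    (runL K X l).Chain' (nocancel X) := by
  induction l with
  | nil => simp only [runL_nil]; exact List.isChain_nil
  | cons e t ih =>
      rcases e with k | p
      · simp only [runL_inl]; exact List.isChain_nil
      · rw [runL_inr]
        refine List.isChain_cons.mpr ⟨?_, ih h.tail⟩
        intro q hq
        match t, hq with
        | Sum.inr q' :: t', hq =>
            simp only [runL_inr, List.head?_cons, Option.mem_def, Option.some.injEq] at hq
            subst hq
            have h2 := (List.isChain_cons_cons.mp h).1
            rcases p with ⟨x, s⟩; rcases q' with ⟨y, sq⟩
            rintro ⟨h3, h4⟩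
            have h2' : x = y → sq ≠ !s := h2
            simp only at h3 h4
            exact (h2' h3) h4

lemma reduce_eq_self {L : List (↥X × Bool)} (h : L.Chain' (nocancel X)) :
    FreeGroup.reduce L = L := by
  induction L with
  | nil => rfl
  | cons p t ih =>
      rw [FreeGroup.reduce.cons, ih h.tail]
      match t, h with
      | [], _ => rfl
      | q :: t', h =>
          have h2 : nocancel X p q := (List.isChain_cons_cons.mp h).1
          have hne : ¬(p.1 = q.1 ∧ p.2 = !q.2) := by
            rintro ⟨h3, h4⟩
            refine h2 ⟨h3, ?_⟩
            rcases p with ⟨x, s⟩; rcases q with ⟨y, sq⟩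
            simp only at h4 ⊢
            exact (by decide : ∀ a b : Bool, a = !b → b = !a) s sq h4
          simp only [if_neg hne]

lemma norm_mk_reduced {L : List (↥X × Bool)} (h : L.Chain' (nocancel X)) :
    FreeGroup.norm (FreeGroup.mk L) = L.length := by
  rw [FreeGroup.norm, FreeGroup.toWord_mk, reduce_eq_self X h]

/-- the normal form syllable list of (the evaluation of) a word -/
noncomputable def gatherL : List (RelLetter K X) → List (Σ b, M2 K X b)
  | [] => []
  | Sum.inl k :: t => ⟨false, k⟩ :: gatherL t
  | Sum.inr p :: t => ⟨true, FreeGroup.mk (p :: runL K X t)⟩ :: gatherL (restL K X t)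
  termination_by l => l.length
  decreasing_by
  · simp
  · simp only [List.length_cons]
    exact Nat.lt_succ_of_le (length_restL_le K X t)

lemma gatherL_nil : gatherL K X [] = [] := by simp [gatherL]

lemma gatherL_inl (k : ↥K) (t) :
    gatherL K X (Sum.inl k :: t) = ⟨false, k⟩ :: gatherL K X t := by simp [gatherL]

lemma gatherL_inr (p) (t) :
    gatherL K X (Sum.inr p :: t) =
      ⟨true, FreeGroup.mk (p :: runL K X t)⟩ :: gatherL K X (restL K X t) := by
  simp [gatherL]

lemma gatherL_prod (l : List (RelLetter K X)) :
    ((gatherL K X l).map (fun p => Monoid.CoprodI.of (M := M2 K X) p.2)).prod =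
      psi K X (evalWord K X l) := by
  induction l using gatherL.induct K X with
  | case1 => simp [gatherL_nil, evalWord_nil]
  | case2 k t ih =>
      rw [gatherL_inl, List.map_cons, List.prod_cons, ih, evalWord_cons, map_mul]
      congr 1
  | case3 p t ih =>
      rw [gatherL_inr, List.map_cons, List.prod_cons, ih, evalWord_cons, map_mul,
        psi_evalLetter_inr, psi_eval_run K X t, ← mul_assoc]
      exact congrArg (· * psi K X (evalWord K X (restL K X t))) (map_mul (Monoid.CoprodI.of (M := M2 K X) (i := true)) (FreeGroup.mk [p] : M2 K X true) (FreeGroup.mk (runL K X t)))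

lemma gatherL_weight {l : List (RelLetter K X)} (h : l.Chain' (okPair K X)) :
    ((gatherL K X l).map (sylW K X)).sum = l.countP Sum.isRight := by
  induction l using gatherL.induct K X with
  | case1 => simp [gatherL_nil]
  | case2 k t ih =>
      rw [gatherL_inl, List.map_cons, List.sum_cons, ih h.tail]
      have h0 : sylW K X ⟨false, k⟩ = 0 := rfl
      rw [h0, List.countP_cons]
      simp
  | case3 p t ih =>
      rw [gatherL_inr, List.map_cons, List.sum_cons, ih (chain_restL K X h.tail)]
      have h1 : sylW K X ⟨true, FreeGroup.mk (p :: runL K X t)⟩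
          = (p :: runL K X t).length := by
        show FreeGroup.norm (FreeGroup.mk (p :: runL K X t)) = _
        exact norm_mk_reduced X (run_chain K X h)
      rw [h1, List.countP_cons, cnt_run_rest K X t]
      simp only [List.length_cons, Sum.isRight_inr, if_true]
      omega

lemma gatherL_ne_one {l : List (RelLetter K X)} (hk : ∀ k : ↥K, Sum.inl k ∈ l → k ≠ 1)
    (h : l.Chain' (okPair K X)) :
    ∀ p ∈ gatherL K X l, p.2 ≠ (1 : M2 K X p.1) := by
  induction l using gatherL.induct K X with
  | case1 => simp [gatherL_nil]
  | case2 k t ih =>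
      rw [gatherL_inl]
      intro p hp0
      rcases List.mem_cons.mp hp0 with rfl | hp
      · exact hk k (List.mem_cons_self)
      · exact ih (fun k' hk' => hk k' (List.mem_cons_of_mem _ hk')) h.tail p hp
  | case3 p t ih =>
      rw [gatherL_inr]
      intro q hq0
      rcases List.mem_cons.mp hq0 with rfl | hq
      · show FreeGroup.mk (p :: runL K X t) ≠ 1
        intro hone
        have hone' : (FreeGroup.mk (p :: runL K X t) : FreeGroup ↥X) = 1 := hone
        have h0 : FreeGroup.norm (FreeGroup.mk (p :: runL K X t)) = 0 := by
          rw [hone', FreeGroup.norm_one]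
        have h1 := norm_mk_reduced X (run_chain K X h)
        rw [runL_inr] at h1
        rw [h0] at h1
        simp at h1
      · refine ih (fun k' hk' => hk k' ?_) (chain_restL K X h.tail) q hq
        exact List.mem_cons_of_mem _ (mem_restL K X hk')

lemma gatherL_chain {l : List (RelLetter K X)} (h : l.Chain' (okPair K X)) :
    (gatherL K X l).Chain' (fun p q => p.1 ≠ q.1) := by
  induction l using gatherL.induct K X with
  | case1 => rw [gatherL_nil]; exact List.isChain_nil
  | case2 k t ih =>
      rw [gatherL_inl]
      refine List.isChain_cons.mpr ⟨?_, ih h.tail⟩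
      intro q hq
      match t, h, hq with
      | [], _, hq => rw [gatherL_nil] at hq; simp at hq
      | Sum.inl k' :: t', h, hq =>
          exact absurd (List.isChain_cons_cons.mp h).1 (by simp [okPair])
      | Sum.inr p' :: t', h, hq =>
          rw [gatherL_inr] at hq
          simp only [List.head?_cons, Option.mem_def, Option.some.injEq] at hq
          subst hq
          simp
  | case3 p t ih =>
      rw [gatherL_inr]
      refine List.isChain_cons.mpr ⟨?_, ih (chain_restL K X h.tail)⟩
      intro q hq
      rcases restL_shape K X t with h0 | ⟨k', t', h0⟩ <;> rw [h0] at hq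
      · rw [gatherL_nil] at hq; simp at hq
      · rw [gatherL_inl] at hq
        simp only [List.head?_cons, Option.mem_def, Option.some.injEq] at hq
        subst hq
        simp

lemma NX_eval_reduced {l : List (RelLetter K X)} (h : IsReducedWord K X l) :
    NX K X (evalWord K X l) = l.countP Sum.isRight := by
  obtain ⟨hk, hch⟩ := h
  set W : Monoid.CoprodI.Word (M2 K X) :=
    ⟨gatherL K X l, gatherL_ne_one K X hk hch, gatherL_chain K X hch⟩ with hW
  have hprod : Monoid.CoprodI.Word.prod W = psi K X (evalWord K X l) := by
    rw [hW]
    show ((gatherL K X l).map (fun p => Monoid.CoprodI.of (M := M2 K X) p.2)).prod = _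
    exact gatherL_prod K X l
  have hequiv : Monoid.CoprodI.Word.equiv (psi K X (evalWord K X l)) = W := by
    rw [← hprod]
    exact (Monoid.CoprodI.Word.equiv (M := M2 K X)).apply_symm_apply W
  unfold NX
  rw [hequiv, hW]
  show ((gatherL K X l).map (sylW K X)).sum = _
  exact gatherL_weight K X hch

lemma xLen_eval_reduced {l : List (RelLetter K X)} (h : IsReducedWord K X l) :
    xLen K X (evalWord K X l) = l.countP Sum.isRight := by
  refine le_antisymm (xLen_le K X l) ?_
  rw [← NX_eval_reduced K X h]
  exact NX_le_xLen K X _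

end QGAux

namespace QGAux
open QMExt Monoid List
open scoped Monoid.Coprod Classical

variable {G : Type*} [Group G] (K : Subgroup G) (X : Set G)

lemma defect_bound {φ : ↥K → ℝ} (hqm : IsQM φ) (g h : ↥K) :
    |φ g + φ h - φ (g * h)| ≤ qmDefect φ := by
  obtain ⟨D', hD'⟩ := hqm
  refine le_csSup ⟨D', ?_⟩ ⟨g, h, rfl⟩
  rintro r ⟨g', h', rfl⟩
  exact hD' g' h'

lemma defect_nonneg {φ : ↥K → ℝ} (hqm : IsQM φ) : 0 ≤ qmDefect φ :=
  le_trans (abs_nonneg _) (defect_bound K hqm 1 1)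

lemma theta_evalLetter_mem (hXsym : ∀ x ∈ X, x⁻¹ ∈ X) (e : RelLetter K X) :
    theta K X (evalLetter K X e) ∈ ((K : Set G) ∪ X) := by
  rcases e with k | ⟨x, _ | _⟩
  · left
    show theta K X (Coprod.inl k) ∈ (K : Set G)
    rw [theta, Coprod.lift_apply_inl]
    exact k.2
  · right
    show theta K X ((Coprod.inr (FreeGroup.of x))⁻¹) ∈ X
    rw [map_inv, theta, Coprod.lift_apply_inr, FreeGroup.lift_apply_of]
    exact hXsym x x.2
  · right
    show theta K X (Coprod.inr (FreeGroup.of x)) ∈ X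
    rw [theta, Coprod.lift_apply_inr, FreeGroup.lift_apply_of]
    exact x.2

lemma theta_eval_eq_prod (l : List (RelLetter K X)) :
    theta K X (evalWord K X l) = (l.map (fun e => theta K X (evalLetter K X e))).prod := by
  induction l with
  | nil => simp [evalWord_nil]
  | cons e t ih => rw [evalWord_cons, map_mul, ih, List.map_cons, List.prod_cons]

lemma exists_geodesic_word (lst : List G) (hmem : ∀ y ∈ lst, y ∈ ((K : Set G) ∪ X)) :
    ∃ w : List (RelLetter K X), theta K X (evalWord K X w) = lst.prod ∧
      w.length = lst.length ∧ w.countP Sum.isRight ≤ lst.length := by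
  induction lst with
  | nil => exact ⟨[], by simp [evalWord_nil], rfl, by simp⟩
  | cons y t ih =>
      obtain ⟨w', hw', hl', hc'⟩ := ih (fun z hz => hmem z (List.mem_cons_of_mem _ hz))
      rcases hmem y (List.mem_cons_self) with hy | hy
      · refine ⟨Sum.inl ⟨y, hy⟩ :: w', ?_, by simp [hl'], ?_⟩
        · rw [evalWord_cons, map_mul, hw', List.prod_cons]
          congr 1
        · simp only [List.countP_cons, List.length_cons, Sum.isRight_inl, if_false,
            Bool.false_eq_true]
          omega
      · refine ⟨Sum.inr (⟨y, hy⟩, true) :: w', ?_, by simp [hl'], ?_⟩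
        · rw [evalWord_cons, map_mul, hw', List.prod_cons]
          congr 1
          show theta K X (Coprod.inr (FreeGroup.of ⟨y, hy⟩)) = y
          rw [theta, Coprod.lift_apply_inr, FreeGroup.lift_apply_of]
        · simp only [List.countP_cons, List.length_cons, Sum.isRight_inr, if_true]
          omega

end QGAux

open QMExt

set_option maxHeartbeats 1600000 in
/-- Every `ε`-minimal path in `Γ(G, K ⊔ X)` is a `(3,2)`-quasi-geodesic: every subpath
`α` (labelled by `m` below) satisfies `l(α) ≤ 3·d(α₋, α₊) + 2`. -/
theorem minimal_path_is_quasigeodesic {G : Type*} [Group G]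
    (K : Subgroup G) (X : Set G)
    (hXsym : ∀ x ∈ X, x⁻¹ ∈ X) (hgen : Function.Surjective (theta K X))
    (φ : ↥K → ℝ) (hqm : IsQM φ) (hanti : IsAntisym φ)
    (C₀ : ℝ) (hC₀ : 0 < C₀) (hctrl : LinearlyControlled K X φ C₀)
    (C : ℝ) (hC : 20 * C₀ + 11 * qmDefect φ ≤ C)
    (ε : ℝ) (hε : 0 < ε) (hεC₀ : ε < C₀)
    (u m v : List (RelLetter K X))
    (hred : IsReducedWord K X (u ++ m ++ v))
    (hmin : phitC K X φ C (evalWord K X (u ++ m ++ v)) ≤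
      PhiC K X φ C (theta K X (evalWord K X (u ++ m ++ v))) + ε) :
    m.length ≤ 3 * wordLenOn ((K : Set G) ∪ X) (theta K X (evalWord K X m)) + 2 := by
  classical
  have hD : ∀ g h : ↥K, |φ g + φ h - φ (g * h)| ≤ qmDefect φ := QGAux.defect_bound K hqm
  have hD0 : 0 ≤ qmDefect φ := QGAux.defect_nonneg K hqm
  set D := qmDefect φ with hDdef
  have hC0 : (0:ℝ) < C := by linarith
  set A := evalWord K X (u ++ m ++ v) with hA
  set d := wordLenOn ((K : Set G) ∪ X) (theta K X (evalWord K X m)) with hd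
  -- a geodesic word representing θ(evalWord m)
  have hdmem : d ∈ {n | ∃ l : List G, (∀ y ∈ l, y ∈ ((K : Set G) ∪ X)) ∧
      l.prod = theta K X (evalWord K X m) ∧ l.length = n} := by
    apply Nat.sInf_mem
    refine ⟨m.length, m.map (fun e => theta K X (evalLetter K X e)), ?_, ?_, by simp⟩
    · intro y hy
      obtain ⟨e, _, rfl⟩ := List.mem_map.mp hy
      exact QGAux.theta_evalLetter_mem K X hXsym e
    · exact (QGAux.theta_eval_eq_prod K X m).symm
  obtain ⟨lst, hlmem, hlprod, hllen⟩ := hdmem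
  obtain ⟨m', hm'θ, hm'len, hm'cnt⟩ := QGAux.exists_geodesic_word K X lst hlmem
  rw [hlprod] at hm'θ
  set b := evalWord K X (u ++ m' ++ v) with hb
  have hθb : theta K X b = theta K X A := by
    rw [hb, hA, QGAux.evalWord_append, QGAux.evalWord_append, QGAux.evalWord_append,
      QGAux.evalWord_append, map_mul, map_mul, map_mul, map_mul, hm'θ]
  -- the infimum defining `PhiC` is over a set bounded from below
  have hbdd : BddBelow {r : ℝ | ∃ a : ↥K ∗ FreeGroup ↥X, theta K X a = theta K X A ∧
      r = phitC K X φ C a} := by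
    refine ⟨φ (eta K X A) - D - 2*C₀ - C₀ * (wordLen K X A : ℝ), ?_⟩
    rintro r ⟨c, hc, rfl⟩
    have hker : c * A⁻¹ ∈ (theta K X).ker := by
      simp [MonoidHom.mem_ker, map_mul, map_inv, hc]
    have hwl : wordLen K X (c * A⁻¹) ≤ wordLen K X c + wordLen K X A := by
      have h5 := QGAux.wordLen_mul_le K X c A⁻¹
      have h6 := QGAux.wordLen_inv_le K X A
      omega
    have hφe := hctrl (wordLen K X c + wordLen K X A) (c * A⁻¹) hker hwl
    have heta : eta K X (c * A⁻¹) * eta K X A = eta K X c := by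
      rw [map_mul, map_inv, inv_mul_cancel_right]
    have hqd := hD (eta K X (c * A⁻¹)) (eta K X A)
    rw [heta] at hqd
    have habs := abs_le.mp hφe
    have habs2 := abs_le.mp hqd
    have hx0 : (0:ℝ) ≤ (xLen K X c : ℝ) := Nat.cast_nonneg _
    have hwx : (wordLen K X c : ℝ) ≤ 2 * (xLen K X c : ℝ) + 1 := by
      exact_mod_cast QGAux.wordLen_le_two_xLen K X c
    have p1 : C₀ * (wordLen K X c : ℝ) ≤ C₀ * (2 * (xLen K X c : ℝ) + 1) :=
      mul_le_mul_of_nonneg_left hwx hC₀.le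
    have p2 : 0 ≤ (C - 2*C₀) * (xLen K X c : ℝ) := mul_nonneg (by linarith) hx0
    simp only [phitC]
    push_cast at habs ⊢
    nlinarith [habs.1, habs2.1, p1, p2]
  have hPhile : PhiC K X φ C (theta K X A) ≤ phitC K X φ C b :=
    csInf_le hbdd ⟨b, hθb, rfl⟩
  have hmain : phitC K X φ C A ≤ phitC K X φ C b + ε := le_trans hmin (by linarith)
  -- counting
  have hxA : xLen K X A = u.countP Sum.isRight + m.countP Sum.isRight
      + v.countP Sum.isRight := by
    rw [hA, QGAux.xLen_eval_reduced K X hred, List.countP_append, List.countP_append]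
  have hxb : xLen K X b ≤ u.countP Sum.isRight + d + v.countP Sum.isRight := by
    have h1 := QGAux.xLen_le K X (u ++ m' ++ v)
    rw [List.countP_append, List.countP_append] at h1
    have h2 : m'.countP Sum.isRight ≤ d := by omega
    rw [hb]
    omega
  -- η-decompositions
  have hetaA : eta K X A = eta K X (evalWord K X u) * eta K X (evalWord K X m)
      * eta K X (evalWord K X v) := by
    rw [hA, QGAux.evalWord_append, QGAux.evalWord_append, map_mul, map_mul]
  have hetab : eta K X b = eta K X (evalWord K X u) * eta K X (evalWord K X m')
      * eta K X (evalWord K X v) := by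
    rw [hb, QGAux.evalWord_append, QGAux.evalWord_append, map_mul, map_mul]
  set eu := eta K X (evalWord K X u)
  set em := eta K X (evalWord K X m)
  set ev := eta K X (evalWord K X v)
  set em' := eta K X (evalWord K X m')
  -- the control on the kernel element m'·m⁻¹
  set q := evalWord K X m' * (evalWord K X m)⁻¹ with hqdef
  have hqker : q ∈ (theta K X).ker := by
    simp [hqdef, MonoidHom.mem_ker, map_mul, map_inv, hm'θ]
  have hqwl : wordLen K X q ≤ d + m.length := by
    have h7' : wordLen K X (evalWord K X m') ≤ d := by
      calc wordLen K X (evalWord K X m') ≤ m'.length := QGAux.wordLen_le K X m'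
        _ = lst.length := hm'len
        _ = d := hllen
    have h5 : wordLen K X q ≤ wordLen K X (evalWord K X m')
        + wordLen K X ((evalWord K X m)⁻¹) := by
      rw [hqdef]
      exact QGAux.wordLen_mul_le K X _ _
    have h6 := QGAux.wordLen_inv_le K X (evalWord K X m)
    have h8 := QGAux.wordLen_le K X m
    omega
  have hφq := hctrl (d + m.length) q hqker hqwl
  have hqeta : eta K X q * em = em' := by
    rw [hqdef, map_mul, map_inv, inv_mul_cancel_right]
  have h9 := hD (eta K X q) em
  rw [hqeta] at h9
  -- quasimorphism estimates
  have h1 := hD (eu * em') ev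
  have h2 := hD eu em'
  have h3 := hD (eu * em) ev
  have h4 := hD eu em
  -- length vs X-count for m
  have hchm : m.Chain' (okPair K X) := hred.2.infix ⟨u, v, rfl⟩
  have hmlen : m.length ≤ 2 * m.countP Sum.isRight + 1 :=
    QGAux.length_le_of_chain K X m.length m le_rfl (QGAux.chain_okP_of_okPair K X hchm)
  -- assemble
  simp only [phitC] at hmain
  rw [hetaA, hetab, hxA] at hmain
  have hxbR : (xLen K X b : ℝ) ≤ (u.countP Sum.isRight : ℝ) + (d : ℝ)
      + (v.countP Sum.isRight : ℝ) := by exact_mod_cast hxb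
  have hCxb : C * (xLen K X b : ℝ) ≤ C * ((u.countP Sum.isRight : ℝ) + (d : ℝ)
      + (v.countP Sum.isRight : ℝ)) := mul_le_mul_of_nonneg_left hxbR hC0.le
  have hφqle : φ (eta K X q) ≤ C₀ * ((d : ℝ) + (m.length : ℝ)) + C₀ := by
    have := le_trans (le_abs_self _) hφq
    push_cast at this
    linarith
  push_cast at hmain
  have key : C * (m.countP Sum.isRight : ℝ) ≤ C * (d : ℝ)
      + C₀ * ((d : ℝ) + (m.length : ℝ)) + C₀ + 5 * D + ε := by
    have a1 := (abs_le.mp h1).1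
    have a2 := (abs_le.mp h2).1
    have a3 := (abs_le.mp h3).2
    have a4 := (abs_le.mp h4).2
    have a9 := (abs_le.mp h9).1
    linarith
  have hmlR : (m.length : ℝ) ≤ 2 * (m.countP Sum.isRight : ℝ) + 1 := by
    exact_mod_cast hmlen
  have p1 : C₀ * (m.length : ℝ) ≤ C₀ * (2 * (m.countP Sum.isRight : ℝ) + 1) :=
    mul_le_mul_of_nonneg_left hmlR hC₀.le
  have hd0 : (0:ℝ) ≤ (d:ℝ) := Nat.cast_nonneg _
  have hcm0 : (0:ℝ) ≤ (m.countP Sum.isRight : ℝ) := Nat.cast_nonneg _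
  have hC2 : (0:ℝ) ≤ C - 2*C₀ := by linarith
  have hC8 : (0:ℝ) ≤ C - 8*C₀ := by linarith
  have key2 : (C - 2*C₀) * (m.countP Sum.isRight : ℝ) ≤ (C + C₀) * (d:ℝ)
      + 2*C₀ + 5*D + ε := by nlinarith [key, p1]
  have hfin : 2 * (m.countP Sum.isRight : ℝ) < 3 * (d:ℝ) + 2 := by
    by_contra hcon
    push_neg at hcon
    have hmul : (C - 2*C₀) * (3*(d:ℝ)+2) ≤ (C - 2*C₀) * (2*(m.countP Sum.isRight : ℝ)) :=
      mul_le_mul_of_nonneg_left hcon hC2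
    nlinarith [key2, hmul, mul_nonneg hC8 hd0]
  have hfinN : 2 * m.countP Sum.isRight < 3 * d + 2 := by exact_mod_cast hfin
  omega
end
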